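/- arXiv:2111.05164 — 7 statements merged into one kernel-verified Lean document; each statement's English description precedes it below -/
import Mathlib

section
/- For every t > 0 and every f ∈ L¹(Ω), the two series Σ_{n≥1} (1 − a_{n−1})^t dE_n(f) and Σ_{n≥1} [(1 − a_{n−1})^t − (1 − a_n)^t] E_n(f) both converge in L¹(Ω) and have the same sum. -/
/-! With `b n = (1 - a n) ^ t`, which decreases to `0`, Abel summation gives
`∑_{n<N} b n dE_{n+1}(f) = ∑_{n<N} (b n - b (n+1)) E_{n+1}(f) + b N E_N(f)`.
Conditional expectations are `L¹`-contractions, so the series on the right converges absolutely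
in `L¹` (its coefficients are nonnegative with sum `b 0`), while the boundary term has `L¹` norm
at most `b N ‖f‖₁ → 0`. -/

open MeasureTheory Filter Set Topology ENNReal

/-- `E_n(f)`: conditional expectation of `f` given `𝒜_n` for `n ≥ 1`, with `E_0 = 0`. -/
noncomputable def condE {Ω : Type*} [m0 : MeasurableSpace Ω] (μ : Measure Ω)
    (F : ℕ → MeasurableSpace Ω) (f : Ω → ℝ) (n : ℕ) : Ω → ℝ :=
  if n = 0 then 0 else μ[f | F n]

/-- The martingale difference `dE_n(f) = E_n(f) - E_{n-1}(f)`. -/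
noncomputable def dE {Ω : Type*} [m0 : MeasurableSpace Ω] (μ : Measure Ω)
    (F : ℕ → MeasurableSpace Ω) (f : Ω → ℝ) (n : ℕ) : Ω → ℝ :=
  fun ω => condE μ F f n ω - condE μ F f (n - 1) ω

theorem Finset.sum_range_smul_sub_eq_sum_sub_smul_add {R M : Type*} [Ring R] [AddCommGroup M]
    [Module R M] (b : ℕ → R) (e : ℕ → M) (he : e 0 = 0) (N : ℕ) :
    ∑ n ∈ Finset.range N, b n • (e (n + 1) - e n) =
      ∑ n ∈ Finset.range N, (b n - b (n + 1)) • e (n + 1) + b N • e N := by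
  induction N with
  | zero => simp [he]
  | succ N ih =>
    rw [Finset.sum_range_succ, Finset.sum_range_succ, ih, sub_smul, smul_sub]
    abel

theorem Antitone.hasSum_sub_succ {b : ℕ → ℝ} (hb : Antitone b) {l : ℝ}
    (hl : Tendsto b atTop (𝓝 l)) : HasSum (fun n => b n - b (n + 1)) (b 0 - l) := by
  refine (hasSum_iff_tendsto_nat_of_nonneg (fun n => sub_nonneg.2 (hb n.le_succ)) _).2 ?_
  simp_rw [Finset.sum_range_sub']
  exact hl.const_sub _

section OneSubRpow

variable {a : ℕ → ℝ} {t : ℝ}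

theorem antitone_one_sub_rpow (ha : Monotone a) (ha1 : Tendsto a atTop (𝓝 1)) (ht : 0 ≤ t) :
    Antitone fun n => (1 - a n) ^ t := fun m n hmn =>
  Real.rpow_le_rpow (sub_nonneg.2 (ha.ge_of_tendsto ha1 n)) (by linarith [ha hmn]) ht

theorem tendsto_one_sub_rpow_zero {ι : Type*} {l : Filter ι} {a : ι → ℝ}
    (ha1 : Tendsto a l (𝓝 1)) (ht : 0 < t) : Tendsto (fun n => (1 - a n) ^ t) l (𝓝 0) := by
  have h : Tendsto (fun n => 1 - a n) l (𝓝 0) := by simpa using ha1.const_sub 1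
  have h' := (Real.continuousAt_rpow_const 0 t (Or.inr ht.le)).tendsto.comp h
  simpa [Function.comp_def, Real.zero_rpow ht.ne'] using h'

end OneSubRpow

section SeriesInLp

variable {α E : Type*} {m0 : MeasurableSpace α} {μ : Measure α} {p : ℝ≥0∞}
  [NormedAddCommGroup E]

theorem exists_memLp_tendsto_eLpNorm_sum_sub [Fact (1 ≤ p)] [CompleteSpace E]
    {u : ℕ → α → E} (hu : ∀ n, MemLp (u n) p μ)
    (hsum : Summable fun n => (eLpNorm (u n) p μ).toReal) :
    ∃ g, MemLp g p μ ∧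
      Tendsto (fun N => eLpNorm (fun x => (∑ n ∈ Finset.range N, u n x) - g x) p μ)
        atTop (𝓝 0) := by
  set U : ℕ → Lp E p μ := fun n => (hu n).toLp
  have hU : Summable fun n => ‖U n‖ := by simpa [U, Lp.norm_toLp] using hsum
  obtain ⟨G, hG⟩ := hU.of_norm
  refine ⟨G, Lp.memLp G, ?_⟩
  refine ((Lp.tendsto_Lp_iff_tendsto_eLpNorm' _ G).1 hG.tendsto_sum_nat).congr
    fun N => eLpNorm_congr_ae ?_
  filter_upwards [Lp.coeFn_fun_finsetSum (Finset.range N) U,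
    ae_all_iff.2 fun n => (hu n).coeFn_toLp] with x hsum hU
  simp only [Pi.sub_apply, hsum, U, hU]

theorem tendsto_eLpNorm_add_sub {ι : Type*} {l : Filter ι} {u v : ι → α → E} {g : α → E}
    (hp : 1 ≤ p) (hu : ∀ i, AEStronglyMeasurable (u i - g) μ)
    (hv : ∀ i, AEStronglyMeasurable (v i) μ)
    (hug : Tendsto (fun i => eLpNorm (u i - g) p μ) l (𝓝 0))
    (hv0 : Tendsto (fun i => eLpNorm (v i) p μ) l (𝓝 0)) :
    Tendsto (fun i => eLpNorm (u i + v i - g) p μ) l (𝓝 0) := by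
  refine tendsto_of_tendsto_of_tendsto_of_le_of_le tendsto_const_nhds
    (by simpa using hug.add hv0) (fun i => zero_le) fun i => ?_
  rw [add_sub_right_comm]
  exact eLpNorm_add_le (hu i) (hv i) hp

variable {𝕜 : Type*} [NormedField 𝕜] [NormedSpace 𝕜 E] {C : ℝ≥0∞}

theorem exists_memLp_tendsto_eLpNorm_sum_smul_sub [Fact (1 ≤ p)] [CompleteSpace E]
    {c : ℕ → 𝕜} {v : ℕ → α → E} (hc : Summable fun n => ‖c n‖) (hv : ∀ n, MemLp (v n) p μ) (hC : C ≠ ∞)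
    (hvC : ∀ n, eLpNorm (v n) p μ ≤ C) :
    ∃ g, MemLp g p μ ∧
      Tendsto (fun N => eLpNorm (fun x => (∑ n ∈ Finset.range N, c n • v n x) - g x) p μ)
        atTop (𝓝 0) := by
  refine exists_memLp_tendsto_eLpNorm_sum_sub (fun n => (hv n).const_smul (c n))
    ((hc.mul_right C.toReal).of_nonneg_of_le (fun n => toReal_nonneg) fun n => ?_)
  change (eLpNorm (c n • v n) p μ).toReal ≤ _
  rw [eLpNorm_const_smul, toReal_mul, toReal_enorm]
  exact mul_le_mul_of_nonneg_left (toReal_mono hC (hvC n)) (norm_nonneg _)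

theorem tendsto_eLpNorm_smul_of_tendsto_zero {ι : Type*} {l : Filter ι} {c : ι → 𝕜}
    {v : ι → α → E} (hc : Tendsto c l (𝓝 0)) (hC : C ≠ ∞)
    (hvC : ∀ i, eLpNorm (v i) p μ ≤ C) :
    Tendsto (fun i => eLpNorm (c i • v i) p μ) l (𝓝 0) := by
  have h : Tendsto (fun i => ‖c i‖ₑ * C) l (𝓝 0) := by
    simpa using ENNReal.Tendsto.mul_const (continuous_enorm.tendsto' 0 0 enorm_zero |>.comp hc)
      (Or.inr hC)
  refine tendsto_of_tendsto_of_tendsto_of_le_of_le tendsto_const_nhds h (fun i => zero_le)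
    fun i => ?_
  rw [eLpNorm_const_smul]
  gcongr
  exact hvC i

end SeriesInLp

section CondE

variable {Ω : Type*} [m0 : MeasurableSpace Ω] {μ : Measure Ω} {F : ℕ → MeasurableSpace Ω}
  {f : Ω → ℝ}

theorem integrable_condE (n : ℕ) : Integrable (condE μ F f n) μ := by
  unfold condE
  split
  exacts [integrable_zero _ _ _, integrable_condExp]

theorem eLpNorm_condE_le {p : ℝ≥0∞} (hp : 1 ≤ p) (n : ℕ) :
    eLpNorm (condE μ F f n) p μ ≤ eLpNorm f p μ := by
  unfold condE
  split
  exacts [by simp, eLpNorm_condExp_le_eLpNorm f hp]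

theorem dE_succ (n : ℕ) : dE μ F f (n + 1) = condE μ F f (n + 1) - condE μ F f n := rfl

end CondE

theorem stmt2_general {Ω : Type*} [m0 : MeasurableSpace Ω] (μ : Measure Ω)
    (F : ℕ → MeasurableSpace Ω)
    (a : ℕ → ℝ) (hamono : StrictMono a)
    (halim : Tendsto a atTop (𝓝 (1 : ℝ)))
    (t : ℝ) (ht : 0 < t) (f : Ω → ℝ) (hf : Integrable f μ) :
    ∃ g : Ω → ℝ, Integrable g μ ∧
      Tendsto (fun N : ℕ => eLpNorm
          (fun ω => (∑ n ∈ Finset.range N, (1 - a n) ^ t * dE μ F f (n + 1) ω) - g ω)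
          1 μ) atTop (𝓝 0) ∧
      Tendsto (fun N : ℕ => eLpNorm
          (fun ω => (∑ n ∈ Finset.range N,
            ((1 - a n) ^ t - (1 - a (n + 1)) ^ t) * condE μ F f (n + 1) ω) - g ω)
          1 μ) atTop (𝓝 0) := by
  set b : ℕ → ℝ := fun n => (1 - a n) ^ t
  have hb : Antitone b := antitone_one_sub_rpow hamono.monotone halim ht.le
  have hb0 : Tendsto b atTop (𝓝 0) := tendsto_one_sub_rpow_zero halim ht
  have hc : Summable fun n => ‖b n - b (n + 1)‖ := by
    simpa [abs_of_nonneg (sub_nonneg.2 (hb (Nat.le_succ _)))] using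
      (hb.hasSum_sub_succ hb0).summable
  have hE n : MemLp (condE μ F f n) 1 μ := memLp_one_iff_integrable.2 (integrable_condE n)
  have hEf n : eLpNorm (condE μ F f n) 1 μ ≤ eLpNorm f 1 μ := eLpNorm_condE_le le_rfl n
  have hf1 : eLpNorm f 1 μ ≠ ∞ := (memLp_one_iff_integrable.2 hf).eLpNorm_ne_top
  obtain ⟨g, hg, hsum⟩ :=
    exists_memLp_tendsto_eLpNorm_sum_smul_sub hc (fun n => hE (n + 1)) hf1 (fun n => hEf (n + 1))
  refine ⟨g, memLp_one_iff_integrable.1 hg, ?_, hsum⟩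
  have habel N : (fun ω => (∑ n ∈ Finset.range N, b n * dE μ F f (n + 1) ω) - g ω) =
      (fun ω => ∑ n ∈ Finset.range N, (b n - b (n + 1)) • condE μ F f (n + 1) ω) +
        b N • condE μ F f N - g := by
    ext ω
    simpa [dE_succ] using Finset.sum_range_smul_sub_eq_sum_sub_smul_add b
      (fun n => condE μ F f n ω) rfl N
  refine (tendsto_eLpNorm_add_sub le_rfl (fun N => ?_) (fun N => ?_) hsum
    (tendsto_eLpNorm_smul_of_tendsto_zero hb0 hf1 hEf)).congr fun N => by rw [habel]
  · exact ((memLp_finsetSum _ fun n _ => (hE (n + 1)).const_mul _).sub hg).1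
  · exact ((hE N).const_smul _).1

/-- For every `t > 0` and `f ∈ L¹(Ω)`, the series `Σ_{n≥1} (1 - a_{n-1})^t dE_n(f)` and
`Σ_{n≥1} [(1 - a_{n-1})^t - (1 - a_n)^t] E_n(f)` both converge in `L¹(Ω)` and have the
same sum. -/
theorem stmt2 {Ω : Type*} [m0 : MeasurableSpace Ω] (μ : Measure Ω) [IsProbabilityMeasure μ]
    (F : ℕ → MeasurableSpace Ω) (hle : ∀ n, F n ≤ m0) (hmono : Monotone F)
    (a : ℕ → ℝ) (ha0 : a 0 = 0) (hamono : StrictMono a)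
    (halim : Tendsto a atTop (𝓝 (1 : ℝ)))
    (t : ℝ) (ht : 0 < t) (f : Ω → ℝ) (hf : Integrable f μ) :
    ∃ g : Ω → ℝ, Integrable g μ ∧
      Tendsto (fun N : ℕ => eLpNorm
          (fun ω => (∑ n ∈ Finset.range N, (1 - a n) ^ t * dE μ F f (n + 1) ω) - g ω)
          1 μ) atTop (𝓝 0) ∧
      Tendsto (fun N : ℕ => eLpNorm
          (fun ω => (∑ n ∈ Finset.range N,
            ((1 - a n) ^ t - (1 - a (n + 1)) ^ t) * condE μ F f (n + 1) ω) - g ω)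
          1 μ) atTop (𝓝 0) :=
  stmt2_general (m0 := m0) μ F a hamono halim t ht f hf
end

section
/- Assume in addition that the σ-algebra generated by ⋃_{n≥1} 𝒜_n equals 𝒜 up to μ-null sets. Then for every f ∈ L²(Ω), ‖T^t(f) − f‖_{L²(Ω)} → 0 as t → 0⁺, where T^t(f) = Σ_{n≥1} (1 − a_{n−1})^t dE_n(f). -/
open MeasureTheory Filter Set Topology ENNReal

/-- `IsTt μ F a t p f Tf` says that `Tf` is the sum of the series
`T^t(f) = Σ_{n≥1} (1 - a_{n-1})^t dE_n(f)`, the series converging in `L_p(Ω)`. -/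
def IsTt {Ω : Type*} [m0 : MeasurableSpace Ω] (μ : Measure Ω)
    (F : ℕ → MeasurableSpace Ω) (a : ℕ → ℝ) (t : ℝ) (p : ℝ≥0∞)
    (f Tf : Ω → ℝ) : Prop :=
  Tendsto (fun N : ℕ => eLpNorm
      (fun ω => (∑ n ∈ Finset.range N, (1 - a n) ^ t * dE μ F f (n + 1) ω) - Tf ω)
      p μ) atTop (𝓝 0)

/-!
In `L²`, `E_n f` is the orthogonal projection of `f` onto `L²(𝒜_n)`, so the martingale differences
`dE_n f` are pairwise orthogonal; as `⋃ₙ L²(𝒜_n)` is dense in `L²(𝒜)` (every set of `𝒜` is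
approximated in measure by sets of some `𝒜_n`), they sum to `f`. Hence, by Pythagoras,
`‖T^t f - f‖₂² = Σₙ (1 - (1 - a_{n-1})^t)² ‖dE_n f‖₂²`, and this tends to `0` as `t → 0⁺` by
dominated convergence: each coefficient tends to `0` and is bounded by `1`.

`T^t f` is only known as the `eLpNorm`-limit of the partial sums and need not be measurable, and the
triangle inequality fails for the lower integral defining `eLpNorm` of a non-measurable function.
The identity is therefore replaced by the bound `‖T^t f - f‖₂² ≤ 2 Σₙ …`, from the quasi-triangle
inequality `(x + y)² ≤ 2x² + 2y²`, which only needs one of the two summands to be measurable.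
-/

open scoped InnerProductSpace symmDiff

section OrthogonalSeries

variable {E : Type*} [NormedAddCommGroup E] [InnerProductSpace ℝ E] {D : ℕ → E}

theorem norm_sum_smul_sq_of_pairwise_inner_eq_zero (hD : Pairwise fun i j => ⟪D i, D j⟫_ℝ = 0)
    (c : ℕ → ℝ) (s : Finset ℕ) :
    ‖∑ i ∈ s, c i • D i‖ ^ 2 = ∑ i ∈ s, c i ^ 2 * ‖D i‖ ^ 2 := by
  classical
  rw [← real_inner_self_eq_norm_sq, sum_inner]
  refine Finset.sum_congr rfl fun i hi => ?_
  rw [inner_sum, Finset.sum_eq_single_of_mem i hi fun j _ hji => by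
    rw [real_inner_smul_left, real_inner_smul_right, hD hji.symm, mul_zero, mul_zero]]
  rw [real_inner_smul_left, real_inner_smul_right, real_inner_self_eq_norm_sq]
  ring

theorem hasSum_norm_sq_of_pairwise_inner_eq_zero (hD : Pairwise fun i j => ⟪D i, D j⟫_ℝ = 0)
    {x : E} (hx : Tendsto (fun N => ∑ n ∈ Finset.range N, D n) atTop (𝓝 x)) :
    HasSum (fun n => ‖D n‖ ^ 2) (‖x‖ ^ 2) := by
  refine (hasSum_iff_tendsto_nat_of_nonneg (fun n => by positivity) _).2 ?_
  convert (hx.norm.pow 2) using 2 with N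
  simpa using (norm_sum_smul_sq_of_pairwise_inner_eq_zero hD 1 (Finset.range N)).symm

theorem norm_sum_smul_sub_le (hD : Pairwise fun i j => ⟪D i, D j⟫_ℝ = 0) {c : ℕ → ℝ}
    (hc : Summable fun n => (1 - c n) ^ 2 * ‖D n‖ ^ 2) (x : E) (N : ℕ) :
    ‖∑ n ∈ Finset.range N, c n • D n - x‖ ≤
      √(∑' n, (1 - c n) ^ 2 * ‖D n‖ ^ 2) + ‖∑ n ∈ Finset.range N, D n - x‖ := by
  have hsplit : ∑ n ∈ Finset.range N, c n • D n - x =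
      ∑ n ∈ Finset.range N, (c n - 1) • D n + (∑ n ∈ Finset.range N, D n - x) := by
    simp only [sub_smul, one_smul, Finset.sum_sub_distrib]
    abel
  have hpartial : ‖∑ n ∈ Finset.range N, (c n - 1) • D n‖ ≤
      √(∑' n, (1 - c n) ^ 2 * ‖D n‖ ^ 2) := by
    rw [← Real.sqrt_sq (norm_nonneg _), norm_sum_smul_sq_of_pairwise_inner_eq_zero hD]
    refine Real.sqrt_le_sqrt ?_
    simp_rw [← neg_sub (1 : ℝ), neg_sq]
    exact hc.sum_le_tsum _ fun n _ => by positivity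
  rw [hsplit]
  exact (norm_add_le _ _).trans (by gcongr)

theorem pairwise_inner_sub_starProjection_eq_zero {U : ℕ → Submodule ℝ E}
    [∀ n, (U n).HasOrthogonalProjection] (hU : Monotone U) {x : E} {y : ℕ → E} (hy0 : y 0 = 0)
    (hy : ∀ n, y (n + 1) = (U n).starProjection x) :
    Pairwise fun i j => ⟪y (i + 1) - y i, y (j + 1) - y j⟫_ℝ = 0 := by
  have hmem : ∀ n, y (n + 1) - y n ∈ U n := fun n => by
    refine sub_mem (hy n ▸ Submodule.starProjection_apply_mem _ _) ?_
    cases n with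
    | zero => simp [hy0]
    | succ n => exact hy n ▸ hU n.le_succ (Submodule.starProjection_apply_mem _ _)
  have horth : ∀ i j, i < j → ⟪y (i + 1) - y i, y (j + 1) - y j⟫_ℝ = 0 := by
    intro i j hij
    obtain ⟨k, rfl⟩ : ∃ k, j = k + 1 := ⟨j - 1, by omega⟩
    have hi : y (i + 1) - y i ∈ U k := hU (by omega) (hmem i)
    have hdiff : y (k + 1 + 1) - y (k + 1) =
        (x - (U k).starProjection x) - (x - (U (k + 1)).starProjection x) := by
      rw [hy, hy]; abel
    rw [hdiff, real_inner_comm, inner_sub_left,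
      Submodule.starProjection_inner_eq_zero _ _ hi,
      Submodule.starProjection_inner_eq_zero _ _ (hU k.le_succ hi), sub_zero]
  intro i j hij
  rcases lt_or_gt_of_ne hij with h | h
  · exact horth i j h
  · rw [real_inner_comm]; exact horth j i h

end OrthogonalSeries
section Tannery

variable {w : ℕ → ℝ}

theorem norm_one_sub_sq_mul_le {c : ℝ} (hc : |c| ≤ 1) (x : ℝ) : ‖(1 - c) ^ 2 * x‖ ≤ 4 * |x| := by
  rw [norm_mul, Real.norm_eq_abs, Real.norm_eq_abs, abs_of_nonneg (sq_nonneg _)]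
  gcongr
  nlinarith [abs_le.mp hc]

theorem summable_one_sub_sq_mul (hw : Summable w) {c : ℕ → ℝ} (hc : ∀ n, |c n| ≤ 1) :
    Summable fun n => (1 - c n) ^ 2 * w n :=
  (hw.abs.mul_left 4).of_norm_bounded fun n => norm_one_sub_sq_mul_le (hc n) (w n)

theorem tendsto_tsum_one_sub_sq_mul {ι : Type*} {l : Filter ι} (hw : Summable w)
    {b : ι → ℕ → ℝ} (hb : ∀ᶠ t in l, ∀ n, |b t n| ≤ 1) (hb1 : ∀ n, Tendsto (b · n) l (𝓝 1)) :
    Tendsto (fun t => ∑' n, (1 - b t n) ^ 2 * w n) l (𝓝 0) := by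
  have hlim : ∀ n, Tendsto (fun t => (1 - b t n) ^ 2 * w n) l (𝓝 0) := fun n => by
    simpa using (((hb1 n).const_sub 1).pow 2).mul_const (w n)
  simpa using tendsto_tsum_of_dominated_convergence (hw.abs.mul_left 4) hlim
    (hb.mono fun t ht n => norm_one_sub_sq_mul_le (ht n) (w n))

end Tannery
section QuasiTriangle

variable {Ω E : Type*} [MeasurableSpace Ω] {μ : Measure Ω} [NormedAddCommGroup E]

theorem eLpNorm_two_sq_eq_lintegral (f : Ω → E) :
    eLpNorm f 2 μ ^ 2 = ∫⁻ x, ‖f x‖ₑ ^ 2 ∂μ := by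
  simpa using eLpNorm_nnreal_pow_eq_lintegral (f := f) (μ := μ) (p := 2) two_ne_zero

theorem enorm_add_sq_le (x y : E) : ‖x + y‖ₑ ^ 2 ≤ 2 * (‖x‖ₑ ^ 2 + ‖y‖ₑ ^ 2) := by
  calc ‖x + y‖ₑ ^ 2 ≤ (‖x‖ₑ + ‖y‖ₑ) ^ 2 := by gcongr; exact enorm_add_le x y
    _ ≤ 2 * (‖x‖ₑ ^ 2 + ‖y‖ₑ ^ 2) := by
      simp only [enorm_eq_nnnorm]
      exact_mod_cast add_sq_le (a := ‖x‖₊) (b := ‖y‖₊)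

theorem eLpNorm_add_sq_le {f : Ω → E} (hf : AEStronglyMeasurable f μ) (g : Ω → E) :
    eLpNorm (f + g) 2 μ ^ 2 ≤ 2 * eLpNorm f 2 μ ^ 2 + 2 * eLpNorm g 2 μ ^ 2 := by
  simp only [eLpNorm_two_sq_eq_lintegral]
  calc ∫⁻ x, ‖(f + g) x‖ₑ ^ 2 ∂μ ≤ ∫⁻ x, 2 * ‖f x‖ₑ ^ 2 + 2 * ‖g x‖ₑ ^ 2 ∂μ :=
        lintegral_mono fun x => (enorm_add_sq_le (f x) (g x)).trans_eq (mul_add _ _ _)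
    _ = 2 * ∫⁻ x, ‖f x‖ₑ ^ 2 ∂μ + 2 * ∫⁻ x, ‖g x‖ₑ ^ 2 ∂μ := by
      rw [lintegral_add_left' ((hf.enorm.pow_const 2).const_mul 2),
        lintegral_const_mul' _ _ ENNReal.ofNat_ne_top,
        lintegral_const_mul' _ _ ENNReal.ofNat_ne_top]

theorem eLpNorm_sub_sq_le_of_tendsto {S : ℕ → Ω → E} {f T : Ω → E}
    (hS : ∀ N, AEStronglyMeasurable (S N) μ) (hf : AEStronglyMeasurable f μ)
    (hST : Tendsto (fun N => eLpNorm (S N - T) 2 μ) atTop (𝓝 0)) {r : ℕ → ℝ≥0∞} {r₀ : ℝ≥0∞}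
    (hr : Tendsto r atTop (𝓝 r₀)) (hSf : ∀ N, eLpNorm (S N - f) 2 μ ≤ r N) :
    eLpNorm (T - f) 2 μ ^ 2 ≤ 2 * r₀ ^ 2 := by
  have hsplit : ∀ N, eLpNorm (T - f) 2 μ ^ 2 ≤ 2 * r N ^ 2 + 2 * eLpNorm (S N - T) 2 μ ^ 2 := by
    intro N
    have h := eLpNorm_add_sq_le ((hS N).sub hf) (T - S N)
    rw [sub_add_sub_cancel', eLpNorm_sub_comm T (S N)] at h
    exact h.trans (by gcongr; exact hSf N)
  have two_ne_top : (2 : ℝ≥0∞) ≠ ∞ := ENNReal.ofNat_ne_top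
  have hlim := (ENNReal.Tendsto.const_mul (ENNReal.Tendsto.pow (n := 2) hr) (Or.inr two_ne_top)).add
    (ENNReal.Tendsto.const_mul (ENNReal.Tendsto.pow (n := 2) hST) (Or.inr two_ne_top))
  simpa using ge_of_tendsto' hlim hsplit

end QuasiTriangle

section Density

theorem isSetRing_iUnion_measurableSet {Ω : Type*} {F : ℕ → MeasurableSpace Ω}
    (hmono : Monotone F) :
    IsSetRing {t : Set Ω | ∃ n, MeasurableSet[F n] t} where
  empty_mem := ⟨0, @MeasurableSet.empty _ (F 0)⟩
  union_mem := by
    rintro s t ⟨m, hs⟩ ⟨n, ht⟩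
    exact ⟨max m n, (hmono (le_max_left m n) s hs).union (hmono (le_max_right m n) t ht)⟩
  sdiff_mem := by
    rintro s t ⟨m, hs⟩ ⟨n, ht⟩
    exact ⟨max m n, (hmono (le_max_left m n) s hs).diff (hmono (le_max_right m n) t ht)⟩

variable {Ω : Type*} [m0 : MeasurableSpace Ω] {μ : Measure Ω} [IsFiniteMeasure μ]
  {F : ℕ → MeasurableSpace Ω}

theorem exists_measurableSet_measure_symmDiff_lt_of_iSup (hle : ∀ n, F n ≤ m0)
    (hmono : Monotone F) {s : Set Ω} (hs : MeasurableSet[⨆ n, F n] s) {ε : ℝ≥0∞} (hε : 0 < ε) :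
    ∃ n t, MeasurableSet[F n] t ∧ μ (t ∆ s) < ε := by
  have hm : (⨆ n, F n) ≤ m0 := iSup_le hle
  obtain ⟨t, ⟨n, ht⟩, hts⟩ := exists_measure_symmDiff_lt_of_generateFrom_isSetRing
    (mα := ⨆ n, F n) (μ := μ.trim hm) (isSetRing_iUnion_measurableSet hmono)
    ⟨{univ}, countable_singleton _, by simp, by simp⟩
    (MeasurableSpace.measurableSpace_iSup_eq F) hs hε
  refine ⟨n, t, ht, ?_⟩
  rwa [trim_measurableSet_eq hm ((le_iSup F n t ht).symmDiff hs)] at hts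

variable {E : Type*} [NormedAddCommGroup E] [NormedSpace ℝ E] {p : ℝ≥0∞} [Fact (1 ≤ p)]

theorem indicatorConstLp_mem_topologicalClosure_iSup_lpMeas (hp : p ≠ ∞) (hle : ∀ n, F n ≤ m0)
    (hmono : Monotone F) {s : Set Ω} (hs : MeasurableSet[⨆ n, F n] s) (c : E) :
    indicatorConstLp p (iSup_le hle s hs) (measure_ne_top μ s) c ∈
      (⨆ n, lpMeas E ℝ (F n) p μ).topologicalClosure := by
  have happrox : ∀ k : ℕ, ∃ n t, MeasurableSet[F n] t ∧ μ (t ∆ s) < (k : ℝ≥0∞)⁻¹ := fun k =>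
    exists_measurableSet_measure_symmDiff_lt_of_iSup hle hmono hs
      (ENNReal.inv_pos.2 (ENNReal.natCast_ne_top k))
  choose n t ht hts using happrox
  have hlim := tendsto_indicatorConstLp_set (ht := fun k => hle _ _ (ht k))
    (hμt := fun k => measure_ne_top μ _) (hs := iSup_le hle s hs) (hμs := measure_ne_top μ s)
    (c := c) hp
    (tendsto_of_tendsto_of_tendsto_of_le_of_le tendsto_const_nhds
      ENNReal.tendsto_inv_nat_nhds_zero (fun _ => zero_le) fun k => (hts k).le)
  refine (Submodule.isClosed_topologicalClosure _).mem_of_tendsto hlim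
    (Eventually.of_forall fun k => Submodule.le_topologicalClosure _ ?_)
  exact Submodule.mem_iSup_of_mem (n k) (mem_lpMeas_indicatorConstLp (hle _) (ht k) _)

theorem topologicalClosure_iSup_lpMeas_eq_top (hp : p ≠ ∞) (hle : ∀ n, F n ≤ m0)
    (hmono : Monotone F)
    (hgen : ∀ s, MeasurableSet s → ∃ u, MeasurableSet[⨆ n, F n] u ∧ μ (s ∆ u) = 0) :
    (⨆ n, lpMeas E ℝ (F n) p μ).topologicalClosure = ⊤ := by
  set C := (⨆ n, lpMeas E ℝ (F n) p μ).topologicalClosure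
  refine eq_top_iff.2 fun g _ => Lp.induction hp (· ∈ C) ?_ (fun _ _ _ _ _ => C.add_mem)
    (Submodule.isClosed_topologicalClosure _) g
  intro c s hs hμs
  obtain ⟨u, hu, hsu⟩ := hgen s hs
  have hsu_ae : s.indicator (fun _ => c) =ᵐ[μ] u.indicator fun _ => c :=
    indicator_ae_eq_of_ae_eq_set (measure_symmDiff_eq_zero_iff.1 hsu)
  have hsu_Lp : (Lp.simpleFunc.indicatorConst p hs hμs.ne c : Lp E p μ) =
      indicatorConstLp p (iSup_le hle u hu) (measure_ne_top μ u) c := by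
    rw [Lp.simpleFunc.coe_indicatorConst]
    exact Lp.ext (indicatorConstLp_coeFn.trans (hsu_ae.trans indicatorConstLp_coeFn.symm))
  rw [hsu_Lp]
  exact indicatorConstLp_mem_topologicalClosure_iSup_lpMeas hp hle hmono hu c

end Density

section Martingale

variable {Ω : Type*} [m0 : MeasurableSpace Ω] {μ : Measure Ω} [IsFiniteMeasure μ]
  {F : ℕ → MeasurableSpace Ω}

theorem exists_pairwise_orthogonal_lp_dE (hle : ∀ n, F n ≤ m0) (hmono : Monotone F)
    (hgen : ∀ s, MeasurableSet s → ∃ u, MeasurableSet[⨆ n, F (n + 1)] u ∧ μ (s ∆ u) = 0)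
    {f : Ω → ℝ} (hf : MemLp f 2 μ) :
    ∃ D : ℕ → Lp ℝ 2 μ, (Pairwise fun i j => ⟪D i, D j⟫_ℝ = 0) ∧
      Tendsto (fun N => ∑ n ∈ Finset.range N, D n) atTop (𝓝 (hf.toLp f)) ∧
      ∀ n, D n =ᵐ[μ] dE μ F f (n + 1) := by
  have : ∀ n, Fact (F n ≤ m0) := fun n => ⟨hle n⟩
  set V : ℕ → Submodule ℝ (Lp ℝ 2 μ) := fun n => lpMeas ℝ ℝ (F (n + 1)) 2 μ
  have hV : Monotone V := fun m n hmn g hg => by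
    rw [mem_lpMeas_iff_aestronglyMeasurable] at hg ⊢
    exact hg.mono (hmono (Nat.succ_le_succ hmn))
  let y : ℕ → Lp ℝ 2 μ
    | 0 => 0
    | n + 1 => (V n).starProjection (hf.toLp f)
  have hy : Tendsto y atTop (𝓝 (hf.toLp f)) := by
    refine (tendsto_add_atTop_iff_nat 1).1 (Submodule.starProjection_tendsto_self V hV _ ?_)
    rw [topologicalClosure_iSup_lpMeas_eq_top ENNReal.ofNat_ne_top (fun n => hle (n + 1))
      (fun m n hmn => hmono (Nat.succ_le_succ hmn)) hgen]
  have hy_ae : ∀ n, y n =ᵐ[μ] condE μ F f n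
    | 0 => by simpa [y, condE] using Lp.coeFn_zero ℝ 2 μ
    | n + 1 => by
      rw [condE, if_neg n.succ_ne_zero]
      exact hf.condExpL2_ae_eq_condExp (hle (n + 1))
  refine ⟨fun n => y (n + 1) - y n,
    pairwise_inner_sub_starProjection_eq_zero hV rfl fun _ => rfl, ?_, fun n => ?_⟩
  · exact hy.congr fun N => ((Finset.sum_range_sub y N).trans (sub_zero _)).symm
  · filter_upwards [Lp.coeFn_sub (y (n + 1)) (y n), hy_ae (n + 1), hy_ae n] with ω h h1 h0
    rw [h, Pi.sub_apply, h1, h0, dE, Nat.add_sub_cancel]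

end Martingale

section Estimate

variable {Ω : Type*} [MeasurableSpace Ω] {μ : Measure Ω}

theorem eLpNorm_sub_le_of_tendsto_eLpNorm_sum {D : ℕ → Lp ℝ 2 μ}
    (hD : Pairwise fun i j => ⟪D i, D j⟫_ℝ = 0) {g : Lp ℝ 2 μ}
    (hDg : Tendsto (fun N => ∑ n ∈ Finset.range N, D n) atTop (𝓝 g)) {d : ℕ → Ω → ℝ}
    (hd : ∀ n, D n =ᵐ[μ] d n) {c : ℕ → ℝ} (hc : Summable fun n => (1 - c n) ^ 2 * ‖D n‖ ^ 2)
    {f T : Ω → ℝ} (hf : g =ᵐ[μ] f)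
    (hT : Tendsto (fun N => eLpNorm (fun ω => (∑ n ∈ Finset.range N, c n * d n ω) - T ω) 2 μ)
      atTop (𝓝 0)) :
    eLpNorm (fun ω => T ω - f ω) 2 μ ≤
      ENNReal.ofReal √(2 * ∑' n, (1 - c n) ^ 2 * ‖D n‖ ^ 2) := by
  set σ := ∑' n, (1 - c n) ^ 2 * ‖D n‖ ^ 2
  set S : ℕ → Ω → ℝ := fun N ω => ∑ n ∈ Finset.range N, c n * d n ω
  have hS : ∀ N, ⇑(∑ n ∈ Finset.range N, c n • D n) =ᵐ[μ] S N := fun N => by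
    filter_upwards [Lp.coeFn_fun_finsetSum (Finset.range N) fun n => c n • D n,
      ae_all_iff.2 fun n => Lp.coeFn_smul (c n) (D n), ae_all_iff.2 hd] with ω hsum hsmul hdω
    rw [hsum]
    exact Finset.sum_congr rfl fun n _ => by rw [hsmul n, Pi.smul_apply, hdω n, smul_eq_mul]
  have hSf : ∀ N, eLpNorm (S N - f) 2 μ ≤
      ENNReal.ofReal (√σ + ‖∑ n ∈ Finset.range N, D n - g‖) := fun N => by
    have hae : S N - f =ᵐ[μ] ⇑(∑ n ∈ Finset.range N, c n • D n - g) := by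
      filter_upwards [Lp.coeFn_sub (∑ n ∈ Finset.range N, c n • D n) g, hS N, hf]
        with ω h1 h2 h3
      rw [h1, Pi.sub_apply, Pi.sub_apply, h2, h3]
    rw [eLpNorm_congr_ae hae, ← Lp.enorm_def, ← ofReal_norm]
    exact ENNReal.ofReal_le_ofReal (norm_sum_smul_sub_le hD hc g N)
  have hr : Tendsto (fun N => ENNReal.ofReal (√σ + ‖∑ n ∈ Finset.range N, D n - g‖)) atTop
      (𝓝 (ENNReal.ofReal √σ)) := by
    simpa using ENNReal.tendsto_ofReal
      (tendsto_const_nhds.add (tendsto_iff_norm_sub_tendsto_zero.1 hDg))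
  have hsq := eLpNorm_sub_sq_le_of_tendsto
    (fun N => (Lp.aestronglyMeasurable _).congr (hS N))
    ((Lp.aestronglyMeasurable g).congr hf) hT hr hSf
  have hσ : 0 ≤ σ := tsum_nonneg fun n => by positivity
  rw [← ENNReal.pow_le_pow_left_iff two_ne_zero, ← ENNReal.ofReal_pow (Real.sqrt_nonneg _),
    Real.sq_sqrt (by positivity), ENNReal.ofReal_mul zero_le_two, ENNReal.ofReal_ofNat,
    ← Real.sq_sqrt hσ, ENNReal.ofReal_pow (Real.sqrt_nonneg _)]
  exact hsq

end Estimate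

/-- If the σ-algebra generated by `⋃_{n≥1} 𝒜_n` equals `𝒜` up to `μ`-null sets, then for every
`f ∈ L²(Ω)` one has `‖T^t(f) - f‖₂ → 0` as `t → 0⁺`. -/
theorem stmt4 {Ω : Type*} [m0 : MeasurableSpace Ω] (μ : Measure Ω) [IsProbabilityMeasure μ]
    (F : ℕ → MeasurableSpace Ω) (hle : ∀ n, F n ≤ m0) (hmono : Monotone F)
    (hgen : ∀ s : Set Ω, MeasurableSet[m0] s →
      ∃ u : Set Ω, MeasurableSet[⨆ n, F (n + 1)] u ∧ μ (symmDiff s u) = 0)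
    (a : ℕ → ℝ) (ha0 : a 0 = 0) (hamono : StrictMono a)
    (halim : Tendsto a atTop (𝓝 (1 : ℝ)))
    (f : Ω → ℝ) (hf : MemLp f 2 μ)
    (Tf : ℝ → Ω → ℝ) (hTf : ∀ t : ℝ, 0 < t → IsTt μ F a t 2 f (Tf t)) :
    Tendsto (fun t : ℝ => eLpNorm (fun ω => Tf t ω - f ω) 2 μ) (𝓝[>] 0) (𝓝 0) := by
  obtain ⟨D, hD, hDsum, hDdE⟩ := exists_pairwise_orthogonal_lp_dE hle hmono hgen hf
  have hw : Summable fun n => ‖D n‖ ^ 2 :=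
    (hasSum_norm_sq_of_pairwise_inner_eq_zero hD hDsum).summable
  have ha : ∀ n, 0 < 1 - a n ∧ 1 - a n ≤ 1 := fun n =>
    ⟨sub_pos.2 ((hamono n.lt_succ_self).trans_le (hamono.monotone.ge_of_tendsto halim _)),
      by linarith [ha0 ▸ hamono.monotone n.zero_le]⟩
  have hcoef : ∀ t : ℝ, 0 ≤ t → ∀ n, |(1 - a n) ^ t| ≤ 1 := fun t ht n => by
    rw [abs_of_nonneg (Real.rpow_nonneg (ha n).1.le t)]
    exact Real.rpow_le_one (ha n).1.le (ha n).2 ht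
  have hcoef_lim : ∀ n, Tendsto (fun t : ℝ => (1 - a n) ^ t) (𝓝[>] 0) (𝓝 1) := fun n => by
    simpa using ((Real.continuousAt_const_rpow (b := 0) (ha n).1.ne').tendsto).mono_left
      nhdsWithin_le_nhds
  have hσ := tendsto_tsum_one_sub_sq_mul (l := 𝓝[>] 0) hw
    (eventually_nhdsWithin_of_forall fun t ht => hcoef t (le_of_lt ht)) hcoef_lim
  have hbound : ∀ t : ℝ, 0 < t → eLpNorm (fun ω => Tf t ω - f ω) 2 μ ≤
      ENNReal.ofReal √(2 * ∑' n, (1 - (1 - a n) ^ t) ^ 2 * ‖D n‖ ^ 2) := fun t ht =>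
    eLpNorm_sub_le_of_tendsto_eLpNorm_sum hD hDsum hDdE
      (summable_one_sub_sq_mul hw (hcoef t ht.le)) hf.coeFn_toLp (hTf t ht)
  refine tendsto_of_tendsto_of_tendsto_of_le_of_le' tendsto_const_nhds ?_
    (Eventually.of_forall fun _ => zero_le) (eventually_nhdsWithin_of_forall hbound)
  simpa using ENNReal.tendsto_ofReal (hσ.const_mul 2).sqrt
end

section
/- Let n ≥ 1 and set y_i = 16^i for 1 ≤ i ≤ n. Let B be the real symmetric n × n matrix with entries B_{ij} = y_i y_j / (y_i + y_j)². Then for every vector x ∈ ℝⁿ, (7/60)·‖x‖² ≤ ⟨Bx, x⟩ ≤ (23/60)·‖x‖²; equivalently, every eigenvalue λ of B satisfies 7/60 ≤ λ ≤ 23/60. -/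
/-!
The diagonal of `B` is `1/4`. Off the diagonal, `y_i y_j / (y_i + y_j)² ≤ y_i / y_j` for
`y_i ≤ y_j`, so `0 ≤ B i j ≤ 16^(-|i - j|)` and each row and column of `N = B - (1/4) • 1` has
absolute sum at most `2 · (1/15)`. The Schur test then gives `|⟨N x, x⟩| ≤ (2/15) ‖x‖²`, and
`1/4 ∓ 2/15 = 7/60, 23/60`.
-/

open Matrix Finset

section SchurTest

variable {ι : Type*} [Fintype ι]

theorem abs_mulVec_dotProduct_le_of_sum_abs_le (A : Matrix ι ι ℝ) {r : ℝ}
    (hrow : ∀ i, ∑ j, |A i j| ≤ r) (hcol : ∀ j, ∑ i, |A i j| ≤ r) (x : ι → ℝ) :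
    |A *ᵥ x ⬝ᵥ x| ≤ r * (x ⬝ᵥ x) := by
  have amgm : ∀ i j, |A i j * x j * x i| ≤ |A i j| * x i ^ 2 / 2 + |A i j| * x j ^ 2 / 2 := by
    intro i j
    rw [abs_mul, abs_mul, ← sq_abs (x i), ← sq_abs (x j)]
    nlinarith [mul_nonneg (abs_nonneg (A i j)) (sq_nonneg (|x i| - |x j|))]
  have hxx : x ⬝ᵥ x = ∑ i, x i ^ 2 := by simp only [dotProduct, sq]
  have row_part : ∑ i, ∑ j, |A i j| * x i ^ 2 / 2 ≤ r * (x ⬝ᵥ x) / 2 :=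
    calc ∑ i, ∑ j, |A i j| * x i ^ 2 / 2 = ∑ i, x i ^ 2 / 2 * ∑ j, |A i j| :=
          sum_congr rfl fun i _ => by rw [mul_sum]; exact sum_congr rfl fun j _ => by ring
      _ ≤ ∑ i, x i ^ 2 / 2 * r := by gcongr with i; exact hrow i
      _ = r * (x ⬝ᵥ x) / 2 := by
          rw [hxx, mul_sum, sum_div]
          exact sum_congr rfl fun i _ => by ring
  have col_part : ∑ i, ∑ j, |A i j| * x j ^ 2 / 2 ≤ r * (x ⬝ᵥ x) / 2 :=
    calc ∑ i, ∑ j, |A i j| * x j ^ 2 / 2 = ∑ j, x j ^ 2 / 2 * ∑ i, |A i j| := by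
          rw [sum_comm]
          exact sum_congr rfl fun j _ => by rw [mul_sum]; exact sum_congr rfl fun i _ => by ring
      _ ≤ ∑ j, x j ^ 2 / 2 * r := by gcongr with j; exact hcol j
      _ = r * (x ⬝ᵥ x) / 2 := by
          rw [hxx, mul_sum, sum_div]
          exact sum_congr rfl fun j _ => by ring
  calc |A *ᵥ x ⬝ᵥ x| = |∑ i, ∑ j, A i j * x j * x i| := by
        simp only [dotProduct, mulVec, sum_mul]
    _ ≤ ∑ i, ∑ j, |A i j * x j * x i| :=
        (abs_sum_le_sum_abs _ _).trans (sum_le_sum fun i _ => abs_sum_le_sum_abs _ _)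
    _ ≤ ∑ i, ∑ j, (|A i j| * x i ^ 2 / 2 + |A i j| * x j ^ 2 / 2) := by
        gcongr with i _ j _
        exact amgm i j
    _ ≤ r * (x ⬝ᵥ x) := by
        simp only [sum_add_distrib]
        linarith

theorem abs_mulVec_dotProduct_sub_le [DecidableEq ι] (A : Matrix ι ι ℝ) {c r : ℝ}
    (hdiag : ∀ i, A i i = c) (hrow : ∀ i, ∑ j ∈ univ.erase i, |A i j| ≤ r)
    (hcol : ∀ j, ∑ i ∈ univ.erase j, |A i j| ≤ r) (x : ι → ℝ) :
    |A *ᵥ x ⬝ᵥ x - c * (x ⬝ᵥ x)| ≤ r * (x ⬝ᵥ x) := by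
  set N := A - c • (1 : Matrix ι ι ℝ) with hN
  have hN_apply : ∀ i j, N i j = A i j - if i = j then c else 0 := fun i j => by
    simp [hN, one_apply]
  have hsum_erase : ∀ i (f : ι → ℝ), f i = 0 → ∑ j, f j = ∑ j ∈ univ.erase i, f j :=
    fun i f hf => (sum_erase _ hf).symm
  have hNrow : ∀ i, ∑ j, |N i j| ≤ r := fun i => by
    rw [hsum_erase i _ (by simp [hN_apply, hdiag])]
    refine (sum_congr rfl fun j hj => ?_).trans_le (hrow i)
    rw [hN_apply, if_neg (ne_of_mem_erase hj).symm, sub_zero]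
  have hNcol : ∀ j, ∑ i, |N i j| ≤ r := fun j => by
    rw [hsum_erase j _ (by simp [hN_apply, hdiag])]
    refine (sum_congr rfl fun i hi => ?_).trans_le (hcol j)
    rw [hN_apply, if_neg (ne_of_mem_erase hi), sub_zero]
  have hsplit : A *ᵥ x ⬝ᵥ x - c * (x ⬝ᵥ x) = N *ᵥ x ⬝ᵥ x := by
    rw [hN, sub_mulVec, sub_dotProduct, smul_mulVec, one_mulVec, smul_dotProduct, smul_eq_mul]
  rw [hsplit]
  exact abs_mulVec_dotProduct_le_of_sum_abs_le N hNrow hNcol x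

end SchurTest

theorem sum_range_pow_succ_le {q : ℝ} (hq₀ : 0 ≤ q) (hq₁ : q < 1) (m : ℕ) :
    ∑ k ∈ range m, q ^ (k + 1) ≤ q / (1 - q) := by
  have hgeom : ∑ k ∈ range m, q ^ k ≤ 1 / (1 - q) := by
    rw [range_eq_Ico]
    simpa using geom_sum_Ico_le_of_lt_one (m := 0) (n := m) hq₀ hq₁
  calc ∑ k ∈ range m, q ^ (k + 1) = q * ∑ k ∈ range m, q ^ k := by
        simp only [mul_sum, pow_succ']
    _ ≤ q * (1 / (1 - q)) := by gcongr
    _ = q / (1 - q) := by ring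

theorem sum_range_erase_pow_dist_le {q : ℝ} (hq₀ : 0 ≤ q) (hq₁ : q < 1) (n i : ℕ) :
    ∑ k ∈ (range n).erase i, q ^ Nat.dist i k ≤ 2 * q / (1 - q) := by
  have hsub : (range n).erase i ⊆ range i ∪ Ico (i + 1) n := by
    intro k hk
    simp only [mem_erase, mem_range, mem_union, mem_Ico] at hk ⊢
    omega
  have hdisj : Disjoint (range i) (Ico (i + 1) n) := by
    rw [disjoint_left]
    intro k hk hk'
    simp only [mem_range, mem_Ico] at hk hk'
    omega
  have below : ∑ k ∈ range i, q ^ Nat.dist i k ≤ q / (1 - q) := by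
    rw [← sum_range_reflect]
    convert sum_range_pow_succ_le hq₀ hq₁ i using 2 with k hk
    rw [mem_range] at hk
    rw [Nat.dist_eq_sub_of_le_right (by omega)]
    congr 1
    omega
  have above : ∑ k ∈ Ico (i + 1) n, q ^ Nat.dist i k ≤ q / (1 - q) := by
    rw [sum_Ico_eq_sum_range]
    convert sum_range_pow_succ_le hq₀ hq₁ (n - (i + 1)) using 2 with k
    rw [Nat.dist_eq_sub_of_le (by omega)]
    congr 1
    omega
  calc ∑ k ∈ (range n).erase i, q ^ Nat.dist i k
      ≤ ∑ k ∈ range i ∪ Ico (i + 1) n, q ^ Nat.dist i k :=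
        sum_le_sum_of_subset_of_nonneg hsub fun _ _ _ => by positivity
    _ = ∑ k ∈ range i, q ^ Nat.dist i k + ∑ k ∈ Ico (i + 1) n, q ^ Nat.dist i k :=
        sum_union hdisj
    _ ≤ 2 * q / (1 - q) := by linarith [show 2 * q / (1 - q) = q / (1 - q) + q / (1 - q) by ring]

theorem mul_div_add_sq_le_div {a b : ℝ} (ha : 0 ≤ a) (hb : 0 < b) :
    a * b / (a + b) ^ 2 ≤ a / b := by
  rw [div_le_div_iff₀ (by positivity) hb]
  nlinarith [mul_nonneg (mul_nonneg ha hb.le) (add_nonneg (sq_nonneg a) (mul_nonneg ha hb.le))]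

theorem sixteen_pow_entry_le_pow_dist (i j : ℕ) :
    (16 : ℝ) ^ (i + 1) * 16 ^ (j + 1) / (16 ^ (i + 1) + 16 ^ (j + 1)) ^ 2
      ≤ (1 / 16) ^ Nat.dist i j := by
  wlog hij : i ≤ j generalizing i j
  · simpa only [Nat.dist_comm, mul_comm, add_comm] using this j i (by omega)
  have hj : (16 : ℝ) ^ (j + 1) = 16 ^ (i + 1) * 16 ^ Nat.dist i j := by
    rw [← pow_add, Nat.dist_eq_sub_of_le hij]
    congr 1
    omega
  calc (16 : ℝ) ^ (i + 1) * 16 ^ (j + 1) / (16 ^ (i + 1) + 16 ^ (j + 1)) ^ 2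
      ≤ 16 ^ (i + 1) / 16 ^ (j + 1) := mul_div_add_sq_le_div (by positivity) (by positivity)
    _ = (1 / 16) ^ Nat.dist i j := by
        rw [hj, div_pow, one_pow]
        field_simp

theorem Fin.sum_univ_erase_pow_dist_le {q : ℝ} (hq₀ : 0 ≤ q) (hq₁ : q < 1) {n : ℕ} (i : Fin n) :
    ∑ j ∈ univ.erase i, q ^ Nat.dist i j ≤ 2 * q / (1 - q) := by
  have hrange :
      ∑ j ∈ univ.erase i, q ^ Nat.dist i j = ∑ k ∈ (range n).erase i, q ^ Nat.dist i k := by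
    rw [sum_erase_eq_sub (mem_univ i), sum_erase_eq_sub (mem_range.2 i.isLt),
      Fin.sum_univ_eq_sum_range (fun k => q ^ Nat.dist i k)]
  rw [hrange]
  exact sum_range_erase_pow_dist_le hq₀ hq₁ n i

theorem stmt9_general (n : ℕ)
    (y : Fin n → ℝ) (hy : ∀ i : Fin n, y i = 16 ^ ((i : ℕ) + 1))
    (B : Matrix (Fin n) (Fin n) ℝ)
    (hB : ∀ i j : Fin n, B i j = y i * y j / (y i + y j) ^ 2)
    (x : Fin n → ℝ) :
    7 / 60 * (x ⬝ᵥ x) ≤ B.mulVec x ⬝ᵥ x ∧ B.mulVec x ⬝ᵥ x ≤ 23 / 60 * (x ⬝ᵥ x) := by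
  have hdiag : ∀ i, B i i = 1 / 4 := fun i => by
    have : (0 : ℝ) < 16 ^ ((i : ℕ) + 1) := by positivity
    rw [hB, hy]
    field_simp
    ring
  have hsymm : ∀ i j, B i j = B j i := fun i j => by rw [hB, hB]; ring
  have hrow : ∀ i, ∑ j ∈ univ.erase i, |B i j| ≤ 2 / 15 := fun i =>
    calc ∑ j ∈ univ.erase i, |B i j| ≤ ∑ j ∈ univ.erase i, (1 / 16 : ℝ) ^ Nat.dist i j :=
          sum_le_sum fun j _ => by
            rw [hB, hy, hy, abs_of_nonneg (by positivity)]
            exact sixteen_pow_entry_le_pow_dist i j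
      _ ≤ 2 / 15 := by
          convert Fin.sum_univ_erase_pow_dist_le (q := 1 / 16) (by norm_num) (by norm_num) i
            using 1
          norm_num
  have hcol : ∀ j, ∑ i ∈ univ.erase j, |B i j| ≤ 2 / 15 := fun j => by
    simpa only [hsymm _ j] using hrow j
  have hB_bound := abs_le.mp (abs_mulVec_dotProduct_sub_le B hdiag hrow hcol x)
  constructor <;> linarith

/-- Let `y_i = 16^i` for `1 ≤ i ≤ n` and `B` the `n × n` matrix with entries
`B_{ij} = y_i y_j/(y_i + y_j)²`. Then `(7/60)‖x‖² ≤ ⟨Bx, x⟩ ≤ (23/60)‖x‖²` for all `x ∈ ℝⁿ`. -/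
theorem stmt9 (n : ℕ) (hn : 1 ≤ n)
    (y : Fin n → ℝ) (hy : ∀ i : Fin n, y i = 16 ^ ((i : ℕ) + 1))
    (B : Matrix (Fin n) (Fin n) ℝ)
    (hB : ∀ i j : Fin n, B i j = y i * y j / (y i + y j) ^ 2)
    (x : Fin n → ℝ) :
    7 / 60 * (x ⬝ᵥ x) ≤ B.mulVec x ⬝ᵥ x ∧ B.mulVec x ⬝ᵥ x ≤ 23 / 60 * (x ⬝ᵥ x) :=
  stmt9_general n y hy B hB x
end

section
/- Let a_0 = 0 and a_n = 1 − e^{−16^{n+1}} for n ≥ 1, so that 1 − a_{n−1} = e^{−16^n} for n ≥ 2. For f ∈ L¹(Ω) and t > 0, the series g_t(f) = Σ_{n≥2} t · 16^n e^{−16^n t} dE_n(f) converges absolutely μ-a.e. and in L¹(Ω), and μ-almost everywhere on Ω: (7/60) · Σ_{n≥2} |dE_n(f)|² ≤ ∫₀^∞ |g_t(f)|² dt/t ≤ (23/60) · Σ_{n≥2} |dE_n(f)|². -/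
/-
Write `b n = dE_{n+2}(f)(ω)` and `psi a t = t a e^{-a t}`, so that
`g_t = Σ psi (16^{n+2}) t · b n`. Since `∫₀^∞ psi a t · psi b t dt/t = ab/(a+b)²`, the
integral of `|Σ_{n<N} psi (16^{n+2}) t · b n|² dt/t` is a quadratic form in `b` whose kernel
has diagonal `1/4` and off-diagonal entries at most `16^{-|m-n|}`; a Schur test bounds the
off-diagonal part by `2/15 = 8/60` times `Σ b n²`, whence the constants `(15 ∓ 8)/60`.
Fatou's lemma carries the upper bound to the whole series. For the lower bound, the cross term
between the first `N` terms and the tail is at most a constant times `Σ_j 16^{-j} |b (j+N)|`,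
which tends to `0` because `dE_n(f) → 0` a.e. by martingale convergence. Absolute and `L¹`
convergence follow from `Σ_n psi (16^{n+2}) t < ∞` and `‖dE_n(f)‖₁ ≤ 2‖f‖₁`.
-/

open MeasureTheory Filter Set Topology ENNReal

/-- `g_t(f) = Σ_{n≥2} t·16ⁿ e^{-16ⁿ t} dE_n(f)`, the `g`-function integrand of the semigroup
associated with the sequence `a_n = 1 - e^{-16^{n+1}}` (so that `1 - a_{n-1} = e^{-16ⁿ}`
for `n ≥ 2`). -/
noncomputable def gFun {Ω : Type*} [m0 : MeasurableSpace Ω] (μ : Measure Ω)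
    (F : ℕ → MeasurableSpace Ω) (f : Ω → ℝ) (t : ℝ) : Ω → ℝ :=
  fun ω => ∑' n : ℕ, t * 16 ^ (n + 2) * Real.exp (-(16 ^ (n + 2) * t)) * dE μ F f (n + 2) ω

namespace SquareFunction

noncomputable def psi (a t : ℝ) : ℝ := t * a * Real.exp (-(a * t))

noncomputable def pairKernel (a b : ℝ) : ℝ := a * b / (a + b) ^ 2

section Kernel

variable {a b : ℝ}

lemma pairKernel_comm (a b : ℝ) : pairKernel a b = pairKernel b a := by
  rw [pairKernel, pairKernel, mul_comm, add_comm]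

lemma pairKernel_self (ha : a ≠ 0) : pairKernel a a = 1 / 4 := by
  rw [pairKernel]
  field_simp
  ring

lemma pairKernel_nonneg (ha : 0 ≤ a) (hb : 0 ≤ b) : 0 ≤ pairKernel a b := by
  unfold pairKernel; positivity

lemma pairKernel_le_div (ha : 0 ≤ a) (hb : 0 < b) : pairKernel a b ≤ a / b := by
  rw [pairKernel, div_le_div_iff₀ (by positivity) hb]
  nlinarith [mul_nonneg ha hb.le, mul_nonneg (mul_nonneg ha hb.le) ha]

lemma psi_nonneg (ha : 0 ≤ a) {t : ℝ} (ht : 0 ≤ t) : 0 ≤ psi a t := by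
  unfold psi; positivity

@[fun_prop]
lemma continuous_psi (a : ℝ) : Continuous (psi a) := by
  unfold psi; fun_prop

lemma integrableOn_mul_exp_neg_mul {r : ℝ} (hr : 0 < r) :
    IntegrableOn (fun t : ℝ => t * Real.exp (-(r * t))) (Ioi 0) := by
  simpa using integrableOn_rpow_mul_exp_neg_mul_rpow (p := 1) (s := 1) (b := r)
    (by norm_num) zero_lt_one hr

lemma integral_mul_exp_neg_mul {r : ℝ} (hr : 0 < r) :
    ∫ t in Ioi (0 : ℝ), t * Real.exp (-(r * t)) = (r ^ 2)⁻¹ := by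
  have h := Real.integral_rpow_mul_exp_neg_mul_Ioi (a := 2) (by norm_num) hr
  norm_num [Real.rpow_natCast] at h
  exact h

lemma psi_mul_psi_div {t : ℝ} (ht : t ≠ 0) :
    psi a t * psi b t / t = a * b * (t * Real.exp (-((a + b) * t))) := by
  rw [psi, psi, add_mul, neg_add, Real.exp_add]
  field_simp

lemma integrableOn_psi_mul_psi_div (hab : 0 < a + b) :
    IntegrableOn (fun t => psi a t * psi b t / t) (Ioi 0) :=
  IntegrableOn.congr_fun ((integrableOn_mul_exp_neg_mul hab).const_mul (a * b))
    (fun _ ht => (psi_mul_psi_div (ne_of_gt ht)).symm) measurableSet_Ioi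

lemma integral_psi_mul_psi_div (hab : 0 < a + b) :
    ∫ t in Ioi (0 : ℝ), psi a t * psi b t / t = pairKernel a b := by
  rw [setIntegral_congr_fun measurableSet_Ioi fun _ ht => psi_mul_psi_div (ne_of_gt ht),
    integral_const_mul, integral_mul_exp_neg_mul hab, pairKernel, div_eq_mul_inv]

lemma lintegral_psi_mul_psi_div (ha : 0 ≤ a) (hb : 0 ≤ b) (hab : 0 < a + b) :
    ∫⁻ t in Ioi (0 : ℝ), ENNReal.ofReal (psi a t * psi b t / t) =
      ENNReal.ofReal (pairKernel a b) := by
  rw [← integral_psi_mul_psi_div hab, ofReal_integral_eq_lintegral_ofReal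
    (integrableOn_psi_mul_psi_div hab)]
  filter_upwards [ae_restrict_mem measurableSet_Ioi] with t (ht : 0 < t)
  exact div_nonneg (mul_nonneg (psi_nonneg ha ht.le) (psi_nonneg hb ht.le)) ht.le

section Sum

variable {ι : Type*} (s : Finset ι) {a : ι → ℝ} (c : ι → ℝ)

lemma sq_sum_psi_div (t : ℝ) :
    (∑ i ∈ s, psi (a i) t * c i) ^ 2 / t =
      ∑ i ∈ s, ∑ j ∈ s, c i * c j * (psi (a i) t * psi (a j) t / t) := by
  simp only [sq, Finset.sum_mul_sum, Finset.sum_div]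
  exact Finset.sum_congr rfl fun i _ => Finset.sum_congr rfl fun j _ => by ring

variable {s c}

lemma integrableOn_sq_sum_psi_div (ha : ∀ i, 0 < a i) :
    IntegrableOn (fun t => (∑ i ∈ s, psi (a i) t * c i) ^ 2 / t) (Ioi 0) := by
  simp only [sq_sum_psi_div]
  exact integrable_finsetSum _ fun i _ => integrable_finsetSum _ fun j _ =>
    (integrableOn_psi_mul_psi_div (add_pos (ha i) (ha j))).const_mul _

lemma integral_sq_sum_psi_div (ha : ∀ i, 0 < a i) :
    ∫ t in Ioi (0 : ℝ), (∑ i ∈ s, psi (a i) t * c i) ^ 2 / t =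
      ∑ i ∈ s, ∑ j ∈ s, c i * c j * pairKernel (a i) (a j) := by
  have hpair (i j : ι) := integrableOn_psi_mul_psi_div (add_pos (ha i) (ha j))
  simp only [sq_sum_psi_div]
  rw [integral_finsetSum _ fun i _ => integrable_finsetSum _ fun j _ => (hpair i j).const_mul _]
  refine Finset.sum_congr rfl fun i _ => ?_
  rw [integral_finsetSum _ fun j _ => (hpair i j).const_mul _]
  refine Finset.sum_congr rfl fun j _ => ?_
  rw [integral_const_mul, integral_psi_mul_psi_div (add_pos (ha i) (ha j))]

lemma lintegral_sq_sum_psi_div (ha : ∀ i, 0 < a i) :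
    ∫⁻ t in Ioi (0 : ℝ), ENNReal.ofReal ((∑ i ∈ s, psi (a i) t * c i) ^ 2 / t) =
      ENNReal.ofReal (∑ i ∈ s, ∑ j ∈ s, c i * c j * pairKernel (a i) (a j)) := by
  rw [← integral_sq_sum_psi_div ha, ofReal_integral_eq_lintegral_ofReal
    (integrableOn_sq_sum_psi_div ha)]
  filter_upwards [ae_restrict_mem measurableSet_Ioi] with t (ht : 0 < t)
  exact div_nonneg (sq_nonneg _) ht.le

end Sum

end Kernel

section Schur

lemma abs_sum_sum_mul_le_of_sum_le {ι : Type*} (s : Finset ι) {K : ι → ι → ℝ}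
    (hK : ∀ i j, 0 ≤ K i j) (hsymm : ∀ i j, K i j = K j i) {c : ℝ}
    (hrow : ∀ i ∈ s, ∑ j ∈ s, K i j ≤ c) (x : ι → ℝ) :
    |∑ i ∈ s, ∑ j ∈ s, x i * x j * K i j| ≤ c * ∑ i ∈ s, x i ^ 2 := by
  have hamgm (i j : ι) : |x i * x j * K i j| ≤ (x i ^ 2 / 2 + x j ^ 2 / 2) * K i j := by
    rw [abs_mul, abs_of_nonneg (hK i j), abs_mul]
    refine mul_le_mul_of_nonneg_right ?_ (hK i j)
    nlinarith [sq_nonneg (|x i| - |x j|), sq_abs (x i), sq_abs (x j)]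
  have hswap : ∑ i ∈ s, ∑ j ∈ s, x j ^ 2 / 2 * K i j =
      ∑ i ∈ s, ∑ j ∈ s, x i ^ 2 / 2 * K i j := by
    rw [Finset.sum_comm]
    simp only [hsymm]
  calc |∑ i ∈ s, ∑ j ∈ s, x i * x j * K i j|
      ≤ ∑ i ∈ s, ∑ j ∈ s, |x i * x j * K i j| :=
        (Finset.abs_sum_le_sum_abs _ _).trans
          (Finset.sum_le_sum fun i _ => Finset.abs_sum_le_sum_abs _ _)
    _ ≤ ∑ i ∈ s, ∑ j ∈ s, (x i ^ 2 / 2 + x j ^ 2 / 2) * K i j :=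
        Finset.sum_le_sum fun i _ => Finset.sum_le_sum fun j _ => hamgm i j
    _ = ∑ i ∈ s, x i ^ 2 * ∑ j ∈ s, K i j := by
        simp only [add_mul, Finset.sum_add_distrib, hswap, Finset.mul_sum]
        rw [← Finset.sum_add_distrib]
        exact Finset.sum_congr rfl fun i _ => by rw [← Finset.sum_add_distrib]; ring_nf
    _ ≤ ∑ i ∈ s, x i ^ 2 * c :=
        Finset.sum_le_sum fun i hi => mul_le_mul_of_nonneg_left (hrow i hi) (sq_nonneg _)
    _ = c * ∑ i ∈ s, x i ^ 2 := by rw [Finset.mul_sum]; simp only [mul_comm]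

end Schur

section Geometric

variable {r : ℝ}

lemma sum_pow_le_of_injOn {s : Finset ℕ} {g : ℕ → ℕ} (hg : Set.InjOn g s)
    (hg1 : ∀ n ∈ s, 1 ≤ g n) (hr0 : 0 ≤ r) (hr1 : r < 1) :
    ∑ n ∈ s, r ^ g n ≤ r / (1 - r) := by
  have hg' : Set.InjOn (fun n => g n - 1) s := fun m hm n hn h => by
    have := hg1 m hm; have := hg1 n hn
    exact hg hm hn (by simp only at h; omega)
  calc ∑ n ∈ s, r ^ g n = r * ∑ k ∈ s.image (fun n => g n - 1), r ^ k := by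
        rw [Finset.sum_image hg', Finset.mul_sum]
        refine Finset.sum_congr rfl fun n hn => ?_
        rw [← pow_succ', Nat.sub_add_cancel (hg1 n hn)]
    _ ≤ r * ∑' k, r ^ k := by
        gcongr
        exact Summable.sum_le_tsum _ (fun k _ => by positivity)
          (summable_geometric_of_lt_one hr0 hr1)
    _ = r / (1 - r) := by rw [tsum_geometric_of_lt_one hr0 hr1, div_eq_mul_inv]

lemma sum_ite_pow_dist_le (s : Finset ℕ) (m : ℕ) (hr0 : 0 ≤ r) (hr1 : r < 1) :
    ∑ n ∈ s, (if m = n then 0 else r ^ Nat.dist m n) ≤ 2 * (r / (1 - r)) := by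
  have hsplit (n : ℕ) : (if m = n then 0 else r ^ Nat.dist m n) =
      (if n < m then r ^ (m - n) else 0) + (if m < n then r ^ (n - m) else 0) := by
    rcases lt_trichotomy n m with h | rfl | h
    · simp [h, h.ne', h.not_gt, Nat.dist, Nat.sub_eq_zero_of_le h.le]
    · simp
    · simp [h, h.ne, h.not_gt, Nat.dist, Nat.sub_eq_zero_of_le h.le]
  rw [Finset.sum_congr rfl fun n _ => hsplit n, Finset.sum_add_distrib, two_mul,
    ← Finset.sum_filter, ← Finset.sum_filter]
  gcongr
  all_goals
    refine sum_pow_le_of_injOn (fun i hi j hj h => ?_) (fun n hn => ?_) hr0 hr1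
    · simp only [Finset.coe_filter, mem_ofPred_eq] at hi hj h
      omega
    · simp only [Finset.mem_filter] at hn
      omega

end Geometric

section Dyadic

noncomputable def scale (n : ℕ) : ℝ := 16 ^ (n + 2)

lemma scale_pos (n : ℕ) : 0 < scale n := by unfold scale; positivity

lemma pairKernel_scale_le (m n : ℕ) :
    pairKernel (scale m) (scale n) ≤ (1 / 16) ^ Nat.dist m n := by
  wlog h : m ≤ n generalizing m n
  · rw [pairKernel_comm, Nat.dist_comm]
    exact this n m (by omega)
  obtain ⟨k, rfl⟩ := Nat.exists_eq_add_of_le h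
  refine (pairKernel_le_div (scale_pos m).le (scale_pos _)).trans_eq ?_
  rw [Nat.dist_eq_sub_of_le h, Nat.add_sub_cancel_left]
  simp only [scale, one_div, inv_pow]
  field_simp
  ring

noncomputable def kernelForm (s : Finset ℕ) (x : ℕ → ℝ) : ℝ :=
  ∑ m ∈ s, ∑ n ∈ s, x m * x n * pairKernel (scale m) (scale n)

lemma abs_kernelForm_sub_le (s : Finset ℕ) (x : ℕ → ℝ) :
    |kernelForm s x - 1 / 4 * ∑ n ∈ s, x n ^ 2| ≤ 2 / 15 * ∑ n ∈ s, x n ^ 2 := by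
  set K : ℕ → ℕ → ℝ := fun m n => if m = n then 0 else pairKernel (scale m) (scale n)
  have hdiag : kernelForm s x =
      ∑ m ∈ s, ∑ n ∈ s, x m * x n * K m n + 1 / 4 * ∑ n ∈ s, x n ^ 2 := by
    have hsplit (m n : ℕ) : x m * x n * pairKernel (scale m) (scale n) =
        x m * x n * K m n + if m = n then 1 / 4 * x m ^ 2 else 0 := by
      rcases eq_or_ne m n with rfl | h
      · simp [K, pairKernel_self (scale_pos m).ne']; ring
      · simp [K, h]
    simp only [kernelForm, hsplit, Finset.sum_add_distrib, Finset.sum_ite_eq, Finset.mul_sum]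
    exact congrArg _ (Finset.sum_congr rfl fun m hm => if_pos hm)
  rw [hdiag, add_sub_cancel_right]
  refine abs_sum_sum_mul_le_of_sum_le s (fun m n => ?_) (fun m n => ?_) (fun m _ => ?_) x
  · simp only [K]
    split_ifs
    exacts [le_rfl, pairKernel_nonneg (scale_pos m).le (scale_pos n).le]
  · simp only [K, eq_comm, pairKernel_comm]
  · calc ∑ n ∈ s, K m n
          ≤ ∑ n ∈ s, (if m = n then 0 else (1 / 16 : ℝ) ^ Nat.dist m n) := by
          refine Finset.sum_le_sum fun n _ => ?_
          simp only [K]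
          split_ifs
          exacts [le_rfl, pairKernel_scale_le m n]
      _ ≤ 2 * ((1 / 16) / (1 - 1 / 16)) := sum_ite_pow_dist_le s m (by norm_num) (by norm_num)
      _ = 2 / 15 := by norm_num

lemma ofReal_kernelForm_le (s : Finset ℕ) (x : ℕ → ℝ) :
    ENNReal.ofReal (kernelForm s x) ≤
      (23 / 60 : ℝ≥0∞) * ∑ n ∈ s, ENNReal.ofReal (x n ^ 2) := by
  have h := (abs_le.1 (abs_kernelForm_sub_le s x)).2
  rw [← ENNReal.ofReal_sum_of_nonneg fun n _ => sq_nonneg _,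
    show (23 / 60 : ℝ≥0∞) = ENNReal.ofReal (23 / 60) by norm_num [ENNReal.ofReal_div_of_pos],
    ← ENNReal.ofReal_mul (by norm_num)]
  exact ENNReal.ofReal_le_ofReal (by linarith)

lemma le_ofReal_kernelForm (s : Finset ℕ) (x : ℕ → ℝ) :
    (7 / 60 : ℝ≥0∞) * ∑ n ∈ s, ENNReal.ofReal (x n ^ 2) ≤
      ENNReal.ofReal (kernelForm s x) := by
  have h := (abs_le.1 (abs_kernelForm_sub_le s x)).1
  rw [← ENNReal.ofReal_sum_of_nonneg fun n _ => sq_nonneg _,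
    show (7 / 60 : ℝ≥0∞) = ENNReal.ofReal (7 / 60) by norm_num [ENNReal.ofReal_div_of_pos],
    ← ENNReal.ofReal_mul (by norm_num)]
  exact ENNReal.ofReal_le_ofReal (by linarith)

end Dyadic

section Series

noncomputable def gSeries (b : ℕ → ℝ) (t : ℝ) : ℝ := ∑' n, psi (scale n) t * b n

lemma psi_le_two_div {a t : ℝ} (ha : 0 < a) (ht : 0 < t) : psi a t ≤ 2 / (a * t) := by
  have hx : 0 < a * t := mul_pos ha ht
  have hexp := Real.pow_div_factorial_le_exp (a * t) hx.le 2
  rw [Nat.factorial_two, Nat.cast_two] at hexp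
  rw [psi, Real.exp_neg, mul_comm t a, le_div_iff₀ hx]
  field_simp
  nlinarith

lemma summable_psi_scale {t : ℝ} (ht : 0 < t) : Summable fun n => psi (scale n) t := by
  refine Summable.of_nonneg_of_le (fun n => psi_nonneg (scale_pos n).le ht.le)
    (fun n => psi_le_two_div (scale_pos n) ht) ?_
  have hgeom := (summable_geometric_of_lt_one (r := (1 / 16 : ℝ)) (by norm_num) (by norm_num))
  refine (hgeom.mul_left (2 / (256 * t))).congr fun n => ?_
  simp only [scale, one_div, inv_pow]
  field_simp
  ring

lemma exists_forall_abs_le_of_tendsto {b : ℕ → ℝ} {a : ℝ} (hb : Tendsto b atTop (𝓝 a)) :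
    ∃ C, ∀ n, |b n| ≤ C := by
  obtain ⟨C, hC⟩ := hb.abs.bddAbove_range
  exact ⟨C, fun n => hC (mem_range_self n)⟩

variable {b : ℕ → ℝ} {C : ℝ}

lemma summable_psi_scale_mul (hC : ∀ n, |b n| ≤ C) {t : ℝ} (ht : 0 < t) :
    Summable fun n => psi (scale n) t * b n := by
  refine Summable.of_norm_bounded ((summable_psi_scale ht).mul_right C) fun n => ?_
  rw [Real.norm_eq_abs, abs_mul, abs_of_nonneg (psi_nonneg (scale_pos n).le ht.le)]
  exact mul_le_mul_of_nonneg_left (hC n) (psi_nonneg (scale_pos n).le ht.le)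

lemma lintegral_sq_sum_range_psi_scale_div (b : ℕ → ℝ) (N : ℕ) :
    ∫⁻ t in Ioi (0 : ℝ),
        ENNReal.ofReal ((∑ n ∈ Finset.range N, psi (scale n) t * b n) ^ 2 / t) =
      ENNReal.ofReal (kernelForm (Finset.range N) b) :=
  lintegral_sq_sum_psi_div scale_pos

theorem lintegral_sq_gSeries_div_le (hC : ∀ n, |b n| ≤ C) :
    ∫⁻ t in Ioi (0 : ℝ), ENNReal.ofReal (gSeries b t ^ 2 / t) ≤
      (23 / 60 : ℝ≥0∞) * ∑' n, ENNReal.ofReal (b n ^ 2) := by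
  have hlim (t : ℝ) (ht : t ∈ Ioi 0) : Tendsto
      (fun N => ENNReal.ofReal ((∑ n ∈ Finset.range N, psi (scale n) t * b n) ^ 2 / t)) atTop
      (𝓝 (ENNReal.ofReal (gSeries b t ^ 2 / t))) :=
    ENNReal.tendsto_ofReal
      (((summable_psi_scale_mul hC ht).hasSum.tendsto_sum_nat.pow 2).div_const t)
  calc ∫⁻ t in Ioi (0 : ℝ), ENNReal.ofReal (gSeries b t ^ 2 / t)
      = ∫⁻ t in Ioi (0 : ℝ), liminf (fun N =>
          ENNReal.ofReal ((∑ n ∈ Finset.range N, psi (scale n) t * b n) ^ 2 / t)) atTop :=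
        setLIntegral_congr_fun measurableSet_Ioi fun t ht => (hlim t ht).liminf_eq.symm
    _ ≤ liminf (fun N => ∫⁻ t in Ioi (0 : ℝ),
          ENNReal.ofReal ((∑ n ∈ Finset.range N, psi (scale n) t * b n) ^ 2 / t)) atTop :=
        lintegral_liminf_le fun N => by fun_prop
    _ ≤ (23 / 60 : ℝ≥0∞) * ∑' n, ENNReal.ofReal (b n ^ 2) := by
        refine liminf_le_of_frequently_le' (Frequently.of_forall fun N => ?_)
        rw [lintegral_sq_sum_range_psi_scale_div]
        exact (ofReal_kernelForm_le _ b).trans (by gcongr; exact ENNReal.sum_le_tsum _)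

end Series

section LowerBound

variable {b : ℕ → ℝ} {C : ℝ}

noncomputable def tailWeight (b : ℕ → ℝ) (N : ℕ) : ℝ :=
  ∑' j, (1 / 16 : ℝ) ^ j * |b (j + N)|

lemma summable_tailWeight (hC : ∀ n, |b n| ≤ C) (N : ℕ) :
    Summable fun j => (1 / 16 : ℝ) ^ j * |b (j + N)| :=
  Summable.of_nonneg_of_le (fun j => by positivity)
    (fun j => mul_le_mul_of_nonneg_left (hC (j + N)) (by positivity))
    ((summable_geometric_of_lt_one (by norm_num) (by norm_num)).mul_right C)

lemma tendsto_tailWeight (hb : Tendsto b atTop (𝓝 0)) (hC : ∀ n, |b n| ≤ C) :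
    Tendsto (tailWeight b) atTop (𝓝 0) := by
  have hterm (j : ℕ) : Tendsto (fun N => (1 / 16 : ℝ) ^ j * |b (j + N)|) atTop (𝓝 0) := by
    simpa using ((hb.comp (tendsto_add_atTop_nat j)).abs.const_mul ((1 / 16 : ℝ) ^ j)).congr
      fun N => by simp [add_comm]
  unfold tailWeight
  simpa only [tsum_zero] using tendsto_tsum_of_dominated_convergence
    ((summable_geometric_of_lt_one (r := (1 / 16 : ℝ)) (by norm_num) (by norm_num)).mul_right C)
    hterm (Eventually.of_forall fun N j => by
      rw [Real.norm_of_nonneg (by positivity)]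
      exact mul_le_mul_of_nonneg_left (hC (j + N)) (by positivity))

lemma enorm_sum_mul_tsum_div_le (b : ℕ → ℝ) (N : ℕ) (t : ℝ) :
    ‖(∑ n ∈ Finset.range N, psi (scale n) t * b n) *
        (∑' j, psi (scale (j + N)) t * b (j + N)) / t‖ₑ ≤
      ∑ n ∈ Finset.range N, ∑' j,
        ‖b n * b (j + N) * (psi (scale n) t * psi (scale (j + N)) t / t)‖ₑ := by
  calc _ = ‖∑ n ∈ Finset.range N, psi (scale n) t * b n‖ₑ *
        ‖∑' j, psi (scale (j + N)) t * b (j + N)‖ₑ * ‖t⁻¹‖ₑ := by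
        rw [div_eq_mul_inv, enorm_mul, enorm_mul]
    _ ≤ (∑ n ∈ Finset.range N, ‖psi (scale n) t * b n‖ₑ) *
        (∑' j, ‖psi (scale (j + N)) t * b (j + N)‖ₑ) * ‖t⁻¹‖ₑ := by
        gcongr
        exacts [enorm_sum_le _ _, enorm_tsum_le_tsum_enorm]
    _ = _ := by
        simp only [Finset.sum_mul, ← ENNReal.tsum_mul_left, ← ENNReal.tsum_mul_right,
          ← enorm_mul]
        exact Finset.sum_congr rfl fun n _ => tsum_congr fun j => by congr 1; ring

lemma lintegral_enorm_mul_psi_scale_div_le (hC : ∀ n, |b n| ≤ C) {n N : ℕ} (hn : n < N)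
    (j : ℕ) :
    ∫⁻ t in Ioi (0 : ℝ),
        ‖b n * b (j + N) * (psi (scale n) t * psi (scale (j + N)) t / t)‖ₑ ≤
      ENNReal.ofReal (C * (1 / 16) ^ (N - n) * ((1 / 16) ^ j * |b (j + N)|)) := by
  have hpos (t : ℝ) (ht : t ∈ Ioi 0) :
      ‖b n * b (j + N) * (psi (scale n) t * psi (scale (j + N)) t / t)‖ₑ =
        ‖b n * b (j + N)‖ₑ *
          ENNReal.ofReal (psi (scale n) t * psi (scale (j + N)) t / t) := by
    rw [enorm_mul, Real.enorm_of_nonneg (div_nonneg (mul_nonneg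
      (psi_nonneg (scale_pos n).le (le_of_lt ht)) (psi_nonneg (scale_pos _).le (le_of_lt ht)))
      (le_of_lt ht))]
  have hK : pairKernel (scale n) (scale (j + N)) ≤ (1 / 16) ^ (N - n) * (1 / 16) ^ j := by
    refine (pairKernel_scale_le n (j + N)).trans_eq ?_
    rw [← pow_add, Nat.dist_eq_sub_of_le (by omega), show j + N - n = N - n + j by omega]
  rw [setLIntegral_congr_fun measurableSet_Ioi hpos, lintegral_const_mul' _ _ enorm_ne_top,
    lintegral_psi_mul_psi_div (scale_pos n).le (scale_pos _).le
      (add_pos (scale_pos n) (scale_pos _)),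
    Real.enorm_eq_ofReal_abs, ← ENNReal.ofReal_mul (abs_nonneg _)]
  refine ENNReal.ofReal_le_ofReal ?_
  rw [abs_mul]
  calc |b n| * |b (j + N)| * pairKernel (scale n) (scale (j + N))
      ≤ C * |b (j + N)| * ((1 / 16) ^ (N - n) * (1 / 16) ^ j) := by
        have hC0 : 0 ≤ C := (abs_nonneg _).trans (hC 0)
        gcongr
        · exact pairKernel_nonneg (scale_pos n).le (scale_pos _).le
        · exact hC n
    _ = _ := by ring

lemma lintegral_cross_le (hC : ∀ n, |b n| ≤ C) (N : ℕ) :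
    ∫⁻ t in Ioi (0 : ℝ), ∑ n ∈ Finset.range N, ∑' j,
        ‖b n * b (j + N) * (psi (scale n) t * psi (scale (j + N)) t / t)‖ₑ ≤
      ENNReal.ofReal (C / 15 * tailWeight b N) := by
  have hC0 : 0 ≤ C := (abs_nonneg _).trans (hC 0)
  have hρ : 0 ≤ tailWeight b N := tsum_nonneg fun j => by positivity
  have hgeom : ∑ n ∈ Finset.range N, (1 / 16 : ℝ) ^ (N - n) ≤ 1 / 15 := by
    refine (sum_pow_le_of_injOn (g := (N - ·)) (fun i hi j hj h => ?_) (fun n hn => ?_)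
      (by norm_num) (by norm_num)).trans_eq (by norm_num)
    · simp only [Finset.coe_range, mem_Iio] at hi hj h
      omega
    · simp only [Finset.mem_range] at hn
      omega
  rw [lintegral_finsetSum _ fun n _ => Measurable.tsum fun j => by fun_prop]
  calc _ = ∑ n ∈ Finset.range N, ∑' j, ∫⁻ t in Ioi (0 : ℝ),
          ‖b n * b (j + N) * (psi (scale n) t * psi (scale (j + N)) t / t)‖ₑ :=
        Finset.sum_congr rfl fun n _ => lintegral_tsum fun j => by fun_prop
    _ ≤ ∑ n ∈ Finset.range N, ∑' j,
          ENNReal.ofReal (C * (1 / 16) ^ (N - n) * ((1 / 16) ^ j * |b (j + N)|)) := by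
        gcongr with n hn j
        exact lintegral_enorm_mul_psi_scale_div_le hC (Finset.mem_range.1 hn) j
    _ = ENNReal.ofReal (∑ n ∈ Finset.range N, C * (1 / 16) ^ (N - n) * tailWeight b N) := by
        rw [ENNReal.ofReal_sum_of_nonneg fun n _ => by positivity]
        refine Finset.sum_congr rfl fun n _ => ?_
        rw [tailWeight, ← tsum_mul_left, ENNReal.ofReal_tsum_of_nonneg (fun j => by positivity)
          ((summable_tailWeight hC N).mul_left _)]
    _ ≤ ENNReal.ofReal (C / 15 * tailWeight b N) := by
        refine ENNReal.ofReal_le_ofReal ?_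
        rw [← Finset.sum_mul, ← Finset.mul_sum]
        calc (C * ∑ n ∈ Finset.range N, (1 / 16 : ℝ) ^ (N - n)) * tailWeight b N
            ≤ C * (1 / 15) * tailWeight b N := by gcongr
          _ = C / 15 * tailWeight b N := by ring

lemma ofReal_sq_sum_range_div_le (hC : ∀ n, |b n| ≤ C) (N : ℕ) {t : ℝ} (ht : 0 < t) :
    ENNReal.ofReal ((∑ n ∈ Finset.range N, psi (scale n) t * b n) ^ 2 / t) ≤
      ENNReal.ofReal (gSeries b t ^ 2 / t) + 2 * ∑ n ∈ Finset.range N, ∑' j,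
        ‖b n * b (j + N) * (psi (scale n) t * psi (scale (j + N)) t / t)‖ₑ := by
  set S := ∑ n ∈ Finset.range N, psi (scale n) t * b n
  set R := ∑' j, psi (scale (j + N)) t * b (j + N)
  have hg : gSeries b t = S + R := ((summable_psi_scale_mul hC ht).sum_add_tsum_nat_add N).symm
  have hsq : S ^ 2 / t ≤ gSeries b t ^ 2 / t + 2 * |S * R / t| := by
    rw [hg, abs_div, abs_of_pos ht, mul_div_assoc', ← add_div]
    gcongr
    nlinarith [neg_abs_le (S * R), sq_nonneg R]
  calc ENNReal.ofReal (S ^ 2 / t)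
      ≤ ENNReal.ofReal (gSeries b t ^ 2 / t) + ENNReal.ofReal (2 * |S * R / t|) :=
        (ENNReal.ofReal_le_ofReal hsq).trans ENNReal.ofReal_add_le
    _ = ENNReal.ofReal (gSeries b t ^ 2 / t) + 2 * ‖S * R / t‖ₑ := by
        rw [ENNReal.ofReal_mul zero_le_two, Real.enorm_eq_ofReal_abs, ENNReal.ofReal_ofNat]
    _ ≤ _ := by gcongr; exact enorm_sum_mul_tsum_div_le b N t

theorem le_lintegral_sq_gSeries_div (hb : Tendsto b atTop (𝓝 0)) :
    (7 / 60 : ℝ≥0∞) * ∑' n, ENNReal.ofReal (b n ^ 2) ≤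
      ∫⁻ t in Ioi (0 : ℝ), ENNReal.ofReal (gSeries b t ^ 2 / t) := by
  obtain ⟨C, hC⟩ := exists_forall_abs_le_of_tendsto hb
  set I := ∫⁻ t in Ioi (0 : ℝ), ENNReal.ofReal (gSeries b t ^ 2 / t)
  have hN (N : ℕ) : (7 / 60 : ℝ≥0∞) * ∑ n ∈ Finset.range N, ENNReal.ofReal (b n ^ 2) ≤
      I + 2 * ENNReal.ofReal (C / 15 * tailWeight b N) :=
    calc _ ≤ ENNReal.ofReal (kernelForm (Finset.range N) b) := le_ofReal_kernelForm _ b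
      _ = ∫⁻ t in Ioi (0 : ℝ),
            ENNReal.ofReal ((∑ n ∈ Finset.range N, psi (scale n) t * b n) ^ 2 / t) :=
          (lintegral_sq_sum_range_psi_scale_div b N).symm
      _ ≤ ∫⁻ t in Ioi (0 : ℝ), (ENNReal.ofReal (gSeries b t ^ 2 / t) +
            2 * ∑ n ∈ Finset.range N, ∑' j,
              ‖b n * b (j + N) * (psi (scale n) t * psi (scale (j + N)) t / t)‖ₑ) :=
          setLIntegral_mono' measurableSet_Ioi fun t ht => ofReal_sq_sum_range_div_le hC N ht
      _ ≤ I + 2 * ENNReal.ofReal (C / 15 * tailWeight b N) := by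
          rw [lintegral_add_right _ (by fun_prop), lintegral_const_mul _ (by fun_prop)]
          gcongr
          exact lintegral_cross_le hC N
  have hcross : Tendsto (fun N => I + 2 * ENNReal.ofReal (C / 15 * tailWeight b N)) atTop
      (𝓝 (I + 2 * ENNReal.ofReal (C / 15 * 0))) :=
    tendsto_const_nhds.add (ENNReal.Tendsto.const_mul
      (ENNReal.tendsto_ofReal ((tendsto_tailWeight hb hC).const_mul _)) (by simp))
  simpa using le_of_tendsto_of_tendsto' (ENNReal.Tendsto.const_mul
    (ENNReal.tendsto_nat_tsum _) (Or.inr (by simp [ENNReal.div_eq_top]))) hcross hN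

end LowerBound

section L1

variable {Ω E : Type*} [MeasurableSpace Ω] {μ : Measure Ω} [NormedAddCommGroup E]

lemma eLpNorm_one_tsum_le {h : ℕ → Ω → E} (hmeas : ∀ n, AEStronglyMeasurable (h n) μ) :
    eLpNorm (fun ω => ∑' n, h n ω) 1 μ ≤ ∑' n, eLpNorm (h n) 1 μ := by
  simp only [eLpNorm_one_eq_lintegral_enorm]
  calc ∫⁻ ω, ‖∑' n, h n ω‖ₑ ∂μ ≤ ∫⁻ ω, ∑' n, ‖h n ω‖ₑ ∂μ :=
        lintegral_mono fun ω => enorm_tsum_le_tsum_enorm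
    _ = _ := lintegral_tsum fun n => (hmeas n).enorm

lemma tendsto_eLpNorm_one_sum_range_sub_tsum {h : ℕ → Ω → E}
    (hmeas : ∀ n, AEStronglyMeasurable (h n) μ)
    (hsum : ∀ᵐ ω ∂μ, Summable fun n => h n ω)
    (hfin : ∑' n, eLpNorm (h n) 1 μ ≠ ∞) :
    Tendsto (fun N => eLpNorm (fun ω => ∑ n ∈ Finset.range N, h n ω - ∑' n, h n ω) 1 μ)
      atTop (𝓝 0) := by
  have htail (N : ℕ) :
      eLpNorm (fun ω => ∑ n ∈ Finset.range N, h n ω - ∑' n, h n ω) 1 μ ≤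
        ∑' j, eLpNorm (h (j + N)) 1 μ :=
    calc _ = eLpNorm (fun ω => ∑' j, h (j + N) ω) 1 μ := by
          rw [← eLpNorm_neg]
          refine eLpNorm_congr_ae ?_
          filter_upwards [hsum] with ω hω
          simp [← hω.sum_add_tsum_nat_add N]
      _ ≤ _ := eLpNorm_one_tsum_le fun j => hmeas (j + N)
  exact tendsto_of_tendsto_of_tendsto_of_le_of_le tendsto_const_nhds
    (ENNReal.tendsto_sum_nat_add _ hfin) (fun N => zero_le) htail

end L1

section Martingale

variable {Ω : Type*} [m0 : MeasurableSpace Ω] {μ : Measure Ω} {F : ℕ → MeasurableSpace Ω}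
  {f : Ω → ℝ}

lemma dE_add_two (n : ℕ) : dE μ F f (n + 2) = μ[f | F (n + 2)] - μ[f | F (n + 1)] := by
  funext ω
  simp [dE, condE]

lemma integrable_dE (n : ℕ) : Integrable (dE μ F f (n + 2)) μ := by
  rw [dE_add_two]
  exact integrable_condExp.sub integrable_condExp

lemma eLpNorm_dE_le (n : ℕ) : eLpNorm (dE μ F f (n + 2)) 1 μ ≤ 2 * eLpNorm f 1 μ := by
  rw [dE_add_two, two_mul]
  exact (eLpNorm_sub_le integrable_condExp.aestronglyMeasurable
    integrable_condExp.aestronglyMeasurable le_rfl).trans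
    (add_le_add (eLpNorm_condExp_le_eLpNorm f le_rfl) (eLpNorm_condExp_le_eLpNorm f le_rfl))

lemma ae_tendsto_dE [IsFiniteMeasure μ] (hle : ∀ n, F n ≤ m0) (hmono : Monotone F) :
    ∀ᵐ ω ∂μ, Tendsto (fun n => dE μ F f (n + 2) ω) atTop (𝓝 0) := by
  let ℱ : Filtration ℕ m0 := ⟨F, hmono, hle⟩
  filter_upwards [tendsto_ae_condExp (ℱ := ℱ) f] with ω hω
  simpa [dE_add_two] using
    (hω.comp (tendsto_add_atTop_nat 2)).sub (hω.comp (tendsto_add_atTop_nat 1))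

lemma tsum_eLpNorm_mul_dE_ne_top (hf : Integrable f μ) {c : ℕ → ℝ} (hc : Summable c) :
    ∑' n, eLpNorm (fun ω => c n * dE μ F f (n + 2) ω) 1 μ ≠ ∞ := by
  refine ne_top_of_le_ne_top (b := ∑' n, ‖c n‖ₑ * (2 * eLpNorm f 1 μ)) ?_
    (ENNReal.tsum_le_tsum fun n => (eLpNorm_const_smul (c n) (dE μ F f (n + 2)) 1 μ).trans_le
      (by gcongr; exact eLpNorm_dE_le n))
  rw [ENNReal.tsum_mul_right]
  exact ENNReal.mul_ne_top (tsum_enorm_ne_top_iff_summable_norm.2 hc.norm)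
    (ENNReal.mul_ne_top ENNReal.ofNat_ne_top (memLp_one_iff_integrable.2 hf).eLpNorm_ne_top)

end Martingale

end SquareFunction

open SquareFunction

/-- For `f ∈ L¹(Ω)` and `t > 0`, the series defining `g_t(f)` converges absolutely `μ`-a.e. and
in `L¹(Ω)`, and `μ`-a.e. on `Ω`:
`(7/60) Σ_{n≥2} |dE_n(f)|² ≤ ∫₀^∞ |g_t(f)|² dt/t ≤ (23/60) Σ_{n≥2} |dE_n(f)|²`. -/
theorem stmt10 {Ω : Type*} [m0 : MeasurableSpace Ω] (μ : Measure Ω) [IsProbabilityMeasure μ]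
    (F : ℕ → MeasurableSpace Ω) (hle : ∀ n, F n ≤ m0) (hmono : Monotone F)
    (f : Ω → ℝ) (hf : Integrable f μ) :
    -- absolute convergence `μ`-a.e.
    (∀ᵐ ω ∂μ, ∀ t : ℝ, 0 < t →
      Summable (fun n : ℕ =>
        |t * 16 ^ (n + 2) * Real.exp (-(16 ^ (n + 2) * t)) * dE μ F f (n + 2) ω|)) ∧
    -- convergence in `L¹(Ω)`
    (∀ t : ℝ, 0 < t →
      Tendsto (fun N : ℕ => eLpNorm
        (fun ω => (∑ n ∈ Finset.range N,
          t * 16 ^ (n + 2) * Real.exp (-(16 ^ (n + 2) * t)) * dE μ F f (n + 2) ω) -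
            gFun μ F f t ω) 1 μ) atTop (𝓝 0)) ∧
    -- the pointwise a.e. two-sided estimate
    (∀ᵐ ω ∂μ,
      (7 / 60 : ℝ≥0∞) * ∑' n : ℕ, ENNReal.ofReal ((dE μ F f (n + 2) ω) ^ 2) ≤
        (∫⁻ t in Ioi (0 : ℝ), ENNReal.ofReal ((gFun μ F f t ω) ^ 2 / t)) ∧
      (∫⁻ t in Ioi (0 : ℝ), ENNReal.ofReal ((gFun μ F f t ω) ^ 2 / t)) ≤
        (23 / 60 : ℝ≥0∞) * ∑' n : ℕ, ENNReal.ofReal ((dE μ F f (n + 2) ω) ^ 2)) := by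
  have hdE := ae_tendsto_dE (μ := μ) (f := f) hle hmono
  have hsum : ∀ᵐ ω ∂μ, ∀ t : ℝ, 0 < t → Summable (fun n : ℕ =>
      |t * 16 ^ (n + 2) * Real.exp (-(16 ^ (n + 2) * t)) * dE μ F f (n + 2) ω|) := by
    filter_upwards [hdE] with ω hω t ht
    obtain ⟨C, hC⟩ := exists_forall_abs_le_of_tendsto hω
    exact (summable_psi_scale_mul hC ht).abs
  refine ⟨hsum, fun t ht => ?_, ?_⟩
  · exact tendsto_eLpNorm_one_sum_range_sub_tsum
      (h := fun n ω => psi (scale n) t * dE μ F f (n + 2) ω)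
      (fun n => (integrable_dE n).aestronglyMeasurable.const_mul _)
      (hsum.mono fun ω hω => (hω t ht).of_abs)
      (tsum_eLpNorm_mul_dE_ne_top hf (summable_psi_scale ht))
  · filter_upwards [hdE] with ω hω
    obtain ⟨C, hC⟩ := exists_forall_abs_le_of_tendsto hω
    exact ⟨le_lintegral_sq_gSeries_div hω, lintegral_sq_gSeries_div_le hC⟩
end

section
/- Let N > 1 and let (b_k)_{k≥1} be a sequence of positive reals such that b_k ≥ N·b_{k−1} for all k ≥ 2. Then for every t > 0, Σ_{k≥1} b_k e^{−t b_k} ≤ N / ((N − 1) t). -/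
/-- If `N > 1` and `(b_k)_{k≥1}` are positive reals with `b_k ≥ N b_{k-1}` for `k ≥ 2`, then
for every `t > 0`, `Σ_{k≥1} b_k e^{-t b_k} ≤ N/((N-1)t)`. -/
theorem stmt15 (N : ℝ) (hN : 1 < N) (b : ℕ → ℝ) (hb : ∀ k, 1 ≤ k → 0 < b k)
    (hgrow : ∀ k, 2 ≤ k → N * b (k - 1) ≤ b k) (t : ℝ) (ht : 0 < t) :
    ∑' k : ℕ, ENNReal.ofReal (b (k + 1) * Real.exp (-(t * b (k + 1)))) ≤
      ENNReal.ofReal (N / ((N - 1) * t)) := by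
  set c : ℕ → ℝ := fun k => if k = 0 then 0 else b k with hc
  have hN0 : (0:ℝ) < N - 1 := by linarith
  have hNpos : (0:ℝ) < N := by linarith
  -- per-term bound
  have key : ∀ k : ℕ, b (k+1) * Real.exp (-(t * b (k+1))) ≤
      (N/(N-1)) * ((Real.exp (-(t * c k)) - Real.exp (-(t * c (k+1))))/t) := by
    intro k
    have hx : 0 < b (k+1) := hb _ (by omega)
    have ha : 0 ≤ c k := by
      rcases Nat.eq_zero_or_pos k with h | h
      · simp [hc, h]
      · simp only [hc]; rw [if_neg (by omega)]
        exact (hb k (by omega)).le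
    have hNa : N * c k ≤ b (k+1) := by
      rcases Nat.eq_zero_or_pos k with h | h
      · subst h; simpa [hc] using (hb 1 le_rfl).le
      · simp only [hc]; rw [if_neg (by omega)]
        have := hgrow (k+1) (by omega)
        simpa using this
    have hax : c k ≤ b (k+1) := by nlinarith
    have hck1 : c (k+1) = b (k+1) := by simp [hc]
    rw [hck1]
    have h1 : b (k+1) * Real.exp (-(t * b (k+1))) ≤
        (N/(N-1)) * ((b (k+1) - c k) * Real.exp (-(t * b (k+1)))) := by
      have hxb : b (k+1) ≤ (N/(N-1)) * (b (k+1) - c k) := by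
        rw [div_mul_eq_mul_div, le_div_iff₀ hN0]
        nlinarith
      have hexp : 0 < Real.exp (-(t * b (k+1))) := Real.exp_pos _
      nlinarith
    refine h1.trans ?_
    have h2 : (b (k+1) - c k) * Real.exp (-(t * b (k+1))) ≤
        (Real.exp (-(t * c k)) - Real.exp (-(t * b (k+1))))/t := by
      rw [le_div_iff₀ ht]
      have hadd := Real.add_one_le_exp (t * (b (k+1) - c k))
      have hE : Real.exp (t * (b (k+1) - c k)) * Real.exp (-(t * b (k+1)))
          = Real.exp (-(t * c k)) := by
        rw [← Real.exp_add]; ring_nf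
      nlinarith [Real.exp_pos (-(t * b (k+1)))]
    have hcoef : (0:ℝ) ≤ N/(N-1) := by positivity
    exact mul_le_mul_of_nonneg_left h2 hcoef
  -- partial sums bounded
  have hpartial : ∀ n : ℕ, ∑ k ∈ Finset.range n, b (k+1) * Real.exp (-(t * b (k+1)))
      ≤ N / ((N-1)*t) := by
    intro n
    calc ∑ k ∈ Finset.range n, b (k+1) * Real.exp (-(t * b (k+1)))
        ≤ ∑ k ∈ Finset.range n,
            (N/(N-1)) * ((Real.exp (-(t * c k)) - Real.exp (-(t * c (k+1))))/t) :=
          Finset.sum_le_sum fun k _ => key k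
      _ = (N/(N-1)) * ((Real.exp (-(t * c 0)) - Real.exp (-(t * c n)))/t) := by
          rw [← Finset.mul_sum, ← Finset.sum_div,
            Finset.sum_range_sub' (fun k => Real.exp (-(t * c k)))]
      _ ≤ N / ((N-1)*t) := by
          have h0 : c 0 = 0 := by simp [hc]
          rw [h0]
          simp only [mul_zero, neg_zero, Real.exp_zero]
          rw [div_mul_div_comm]
          have he : (0:ℝ) < Real.exp (-(t * c n)) := Real.exp_pos _
          gcongr
          nlinarith
  -- conclude via finite subsums
  rw [ENNReal.tsum_eq_iSup_sum]
  refine iSup_le fun s => ?_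
  obtain ⟨n, hn⟩ := s.exists_nat_subset_range
  have hnonneg : ∀ k ∈ Finset.range n, 0 ≤ b (k+1) * Real.exp (-(t * b (k+1))) :=
    fun k _ => mul_nonneg (hb _ (by omega)).le (Real.exp_pos _).le
  calc ∑ k ∈ s, ENNReal.ofReal (b (k + 1) * Real.exp (-(t * b (k + 1))))
      ≤ ∑ k ∈ Finset.range n, ENNReal.ofReal (b (k + 1) * Real.exp (-(t * b (k + 1)))) :=
        Finset.sum_le_sum_of_subset hn
    _ = ENNReal.ofReal (∑ k ∈ Finset.range n, b (k+1) * Real.exp (-(t * b (k+1)))) :=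
        (ENNReal.ofReal_sum_of_nonneg hnonneg).symm
    _ ≤ ENNReal.ofReal (N / ((N-1)*t)) := ENNReal.ofReal_le_ofReal (hpartial n)
end

section
/- Let X be a Banach space, 1 ≤ q < ∞, N > 1, and let (b_k)_{k≥1} be positive reals with b_k ≥ N·b_{k−1} for all k ≥ 2. Then for every f ∈ L¹(Ω; X), μ-almost everywhere on Ω: ∫₀^∞ ‖Σ_{k≥1} t b_k e^{−t b_k} dE_{k+1}(f)‖_X^q dt/t ≤ (N/(N−1))^{q−1} · Σ_{k≥1} ‖dE_{k+1}(f)‖_X^q. -/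
/-!
The inequality holds for every sequence `v_k` in a normed space, here `v_k = dE_{k+2}(f)(ω)`.
Fix `t > 0` and put `s_k = t b_k`, so that `s_{k+1} ≥ N s_k`. Since
`(s_{k+1} - s_k) e^{-s_{k+1}} ≤ e^{-s_k} - e^{-s_{k+1}}` and `s_{k+1} ≤ N/(N-1) (s_{k+1} - s_k)`,
the weights `s_k e^{-s_k}` telescope to a total mass at most `N/(N-1)`. The triangle inequality
and Jensen's inequality for these weights bound the integrand at `t` by
`(N/(N-1))^{q-1} ∑ b_k e^{-t b_k} ‖v_k‖^q`, and `∫₀^∞ b e^{-t b} dt = 1`.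
-/

open MeasureTheory Filter Set Topology ENNReal

/-- `E_n(f)`: `X`-valued conditional expectation of `f` given `𝒜_n` for `n ≥ 1`, with
`E_0 = 0`. -/
noncomputable def condEv {Ω : Type*} {X : Type*} [NormedAddCommGroup X] [NormedSpace ℝ X]
    [CompleteSpace X] [m0 : MeasurableSpace Ω] (μ : Measure Ω)
    (F : ℕ → MeasurableSpace Ω) (f : Ω → X) (n : ℕ) : Ω → X :=
  if n = 0 then 0 else μ[f | F n]

/-- The `X`-valued martingale difference `dE_n(f) = E_n(f) - E_{n-1}(f)`. -/
noncomputable def dEv {Ω : Type*} {X : Type*} [NormedAddCommGroup X] [NormedSpace ℝ X]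
    [CompleteSpace X] [m0 : MeasurableSpace Ω] (μ : Measure Ω)
    (F : ℕ → MeasurableSpace Ω) (f : Ω → X) (n : ℕ) : Ω → X :=
  fun ω => condEv μ F f n ω - condEv μ F f (n - 1) ω

lemma sub_mul_exp_neg_le_exp_neg_sub_exp_neg (a b : ℝ) :
    (b - a) * Real.exp (-b) ≤ Real.exp (-a) - Real.exp (-b) := by
  have h := mul_le_mul_of_nonneg_right (Real.add_one_le_exp (b - a)) (Real.exp_pos (-b)).le
  rw [← Real.exp_add, show b - a + -b = -a by ring] at h
  linarith

section GeometricWeights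

variable {N : ℝ} (hN : 1 < N) {s : ℕ → ℝ} (hgrow : ∀ k, N * s k ≤ s (k + 1))
include hN hgrow

lemma sum_range_succ_mul_exp_neg_le (hs0 : 0 ≤ s 0) (n : ℕ) :
    ∑ k ∈ Finset.range (n + 1), s k * Real.exp (-s k) ≤ N / (N - 1) * (1 - Real.exp (-s n)) := by
  have hN1 : 0 < N - 1 := by linarith
  have hc : 1 ≤ N / (N - 1) := by rw [le_div_iff₀ hN1]; linarith
  induction n with
  | zero =>
    have h := sub_mul_exp_neg_le_exp_neg_sub_exp_neg 0 (s 0)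
    have h1 : 0 ≤ 1 - Real.exp (-s 0) := by simpa using hs0
    simp only [zero_add, Finset.sum_range_one, sub_zero, neg_zero, Real.exp_zero] at h ⊢
    nlinarith
  | succ n ih =>
    have hs : s (n + 1) ≤ N / (N - 1) * (s (n + 1) - s n) := by
      rw [div_mul_eq_mul_div, le_div_iff₀ hN1]
      nlinarith [hgrow n]
    have hstep := mul_le_mul_of_nonneg_right hs (Real.exp_pos (-s (n + 1))).le
    have htele := sub_mul_exp_neg_le_exp_neg_sub_exp_neg (s n) (s (n + 1))
    rw [Finset.sum_range_succ]
    nlinarith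

lemma sum_range_mul_exp_neg_le (hs0 : 0 ≤ s 0) (n : ℕ) :
    ∑ k ∈ Finset.range n, s k * Real.exp (-s k) ≤ N / (N - 1) := by
  have hc : 0 ≤ N / (N - 1) := div_nonneg (by linarith) (by linarith)
  cases n with
  | zero => simpa using hc
  | succ n =>
    refine (sum_range_succ_mul_exp_neg_le hN hgrow hs0 n).trans ?_
    have := Real.exp_pos (-s n)
    nlinarith

variable (hs : ∀ k, 0 ≤ s k)
include hs

lemma summable_mul_exp_neg : Summable fun k => s k * Real.exp (-s k) :=
  summable_of_sum_range_le (fun k => mul_nonneg (hs k) (Real.exp_pos _).le)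
    (sum_range_mul_exp_neg_le hN hgrow (hs 0))

lemma tsum_mul_exp_neg_le : ∑' k, s k * Real.exp (-s k) ≤ N / (N - 1) :=
  Real.tsum_le_of_sum_range_le (fun k => mul_nonneg (hs k) (Real.exp_pos _).le)
    (sum_range_mul_exp_neg_le hN hgrow (hs 0))

end GeometricWeights

namespace ENNReal

lemma inner_le_weight_mul_Lp_tsum {p : ℝ} (hp : 1 ≤ p) (w f : ℕ → ℝ≥0∞) :
    ∑' i, w i * f i ≤ (∑' i, w i) ^ (1 - p⁻¹) * (∑' i, w i * f i ^ p) ^ p⁻¹ := by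
  have hp₁ : 0 ≤ 1 - p⁻¹ := sub_nonneg.2 (inv_le_one_of_one_le₀ hp)
  rw [ENNReal.tsum_eq_iSup_sum]
  refine iSup_le fun s => (inner_le_weight_mul_Lp_of_nonneg s hp w f).trans ?_
  gcongr <;> exact ENNReal.sum_le_tsum s

lemma rpow_tsum_mul_le {p : ℝ} (hp : 1 ≤ p) (w f : ℕ → ℝ≥0∞) :
    (∑' i, w i * f i) ^ p ≤ (∑' i, w i) ^ (p - 1) * ∑' i, w i * f i ^ p := by
  have hp₀ : 0 < p := zero_lt_one.trans_le hp
  calc (∑' i, w i * f i) ^ p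
      ≤ ((∑' i, w i) ^ (1 - p⁻¹) * (∑' i, w i * f i ^ p) ^ p⁻¹) ^ p :=
        rpow_le_rpow (inner_le_weight_mul_Lp_tsum hp w f) hp₀.le
    _ = (∑' i, w i) ^ (p - 1) * ∑' i, w i * f i ^ p := by
        rw [mul_rpow_of_nonneg _ _ hp₀.le, ← rpow_mul, ← rpow_mul, inv_mul_cancel₀ hp₀.ne',
          rpow_one, sub_mul, one_mul, inv_mul_cancel₀ hp₀.ne']

end ENNReal

lemma lintegral_mul_exp_neg_mul_Ioi {r : ℝ} (hr : 0 < r) :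
    ∫⁻ t in Ioi (0 : ℝ), ENNReal.ofReal (r * Real.exp (-(t * r))) = 1 := by
  open ProbabilityTheory in
  calc ∫⁻ t in Ioi (0 : ℝ), ENNReal.ofReal (r * Real.exp (-(t * r)))
      = ∫⁻ t in Ici (0 : ℝ), exponentialPDF r t := by
        rw [Measure.restrict_congr_set Ioi_ae_eq_Ici.symm]
        refine setLIntegral_congr_fun measurableSet_Ioi fun t ht => ?_
        rw [exponentialPDF_of_nonneg (le_of_lt ht), mul_comm t r]
    _ = ∫⁻ t, exponentialPDF r t := by
        rw [← lintegral_add_compl (μ := volume) _ measurableSet_Ici, compl_Ici,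
          lintegral_exponentialPDF_of_nonpos le_rfl, add_zero]
    _ = 1 := lintegral_exponentialPDF_eq_one hr

section

variable {E : Type*} [NormedAddCommGroup E] [NormedSpace ℝ E] {q N : ℝ} (hq : 1 ≤ q)
  (hN : 1 < N) {b : ℕ → ℝ} (hgrow : ∀ k, N * b k ≤ b (k + 1)) (v : ℕ → E)
include hq hN hgrow

lemma ofReal_norm_tsum_rpow_div_le (hb : ∀ k, 0 ≤ b k) {t : ℝ} (ht : 0 < t) :
    ENNReal.ofReal (‖∑' k, (t * b k * Real.exp (-(t * b k))) • v k‖ ^ q / t) ≤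
      ENNReal.ofReal ((N / (N - 1)) ^ (q - 1)) *
        ∑' k, ENNReal.ofReal (b k * Real.exp (-(t * b k))) * ENNReal.ofReal (‖v k‖ ^ q) := by
  have hq₀ : 0 < q := zero_lt_one.trans_le hq
  set w : ℕ → ℝ := fun k => t * b k * Real.exp (-(t * b k))
  have hs : ∀ k, 0 ≤ t * b k := fun k => mul_nonneg ht.le (hb k)
  have hsgrow : ∀ k, N * (t * b k) ≤ t * b (k + 1) := fun k => by
    nlinarith [mul_le_mul_of_nonneg_left (hgrow k) ht.le]
  have hw : ∀ k, 0 ≤ w k := fun k => mul_nonneg (hs k) (Real.exp_pos _).le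
  have hmass : ∑' k, ENNReal.ofReal (w k) ≤ ENNReal.ofReal (N / (N - 1)) := by
    rw [← ENNReal.ofReal_tsum_of_nonneg hw (summable_mul_exp_neg hN hsgrow hs)]
    exact ENNReal.ofReal_le_ofReal (tsum_mul_exp_neg_le hN hsgrow hs)
  have htri : ‖∑' k, w k • v k‖ₑ ≤ ∑' k, ENNReal.ofReal (w k) * ‖v k‖ₑ := by
    refine (enorm_tsum_le_tsum_enorm (f := fun k => w k • v k)).trans_eq (tsum_congr fun k => ?_)
    rw [enorm_smul, Real.enorm_of_nonneg (hw k)]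
  calc ENNReal.ofReal (‖∑' k, w k • v k‖ ^ q / t)
      = ‖∑' k, w k • v k‖ₑ ^ q / ENNReal.ofReal t := by
        rw [ENNReal.ofReal_div_of_pos ht, ← ENNReal.ofReal_rpow_of_nonneg (norm_nonneg _) hq₀.le,
          ofReal_norm]
    _ ≤ (∑' k, ENNReal.ofReal (w k) * ‖v k‖ₑ) ^ q / ENNReal.ofReal t := by gcongr
    _ ≤ ENNReal.ofReal (N / (N - 1)) ^ (q - 1) *
          (∑' k, ENNReal.ofReal (w k) * ‖v k‖ₑ ^ q) / ENNReal.ofReal t := by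
        gcongr
        exact (ENNReal.rpow_tsum_mul_le hq _ _).trans (by gcongr)
    _ = _ := by
        rw [ENNReal.ofReal_rpow_of_pos (div_pos (by linarith) (by linarith)), mul_div_assoc,
          ENNReal.div_eq_inv_mul, ← ENNReal.tsum_mul_left]
        congr 1
        refine tsum_congr fun k => ?_
        rw [← ofReal_norm, ENNReal.ofReal_rpow_of_nonneg (norm_nonneg _) hq₀.le,
          show w k = t * (b k * Real.exp (-(t * b k))) by ring, ENNReal.ofReal_mul ht.le,
          ← mul_assoc, ← mul_assoc,
          ENNReal.inv_mul_cancel (by simpa using ht) ENNReal.ofReal_ne_top, one_mul]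

theorem lintegral_norm_tsum_rpow_le (hb : ∀ k, 0 < b k) :
    ∫⁻ t in Ioi (0 : ℝ), ENNReal.ofReal (‖∑' k, (t * b k * Real.exp (-(t * b k))) • v k‖ ^ q / t) ≤
      ENNReal.ofReal ((N / (N - 1)) ^ (q - 1)) * ∑' k, ENNReal.ofReal (‖v k‖ ^ q) := by
  have hmeas : ∀ k, Measurable fun t : ℝ => ENNReal.ofReal (b k * Real.exp (-(t * b k))) :=
    fun k => by fun_prop
  calc _ ≤ ∫⁻ t in Ioi (0 : ℝ), ENNReal.ofReal ((N / (N - 1)) ^ (q - 1)) *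
          ∑' k, ENNReal.ofReal (b k * Real.exp (-(t * b k))) * ENNReal.ofReal (‖v k‖ ^ q) :=
        setLIntegral_mono (by fun_prop) fun t ht =>
          ofReal_norm_tsum_rpow_div_le hq hN hgrow v (fun k => (hb k).le) ht
    _ = ENNReal.ofReal ((N / (N - 1)) ^ (q - 1)) * ∑' k,
          (∫⁻ t in Ioi (0 : ℝ), ENNReal.ofReal (b k * Real.exp (-(t * b k)))) *
            ENNReal.ofReal (‖v k‖ ^ q) := by
        rw [lintegral_const_mul' _ _ ENNReal.ofReal_ne_top,
          lintegral_tsum fun k => ((hmeas k).mul_const _).aemeasurable]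
        simp_rw [lintegral_mul_const' _ _ ENNReal.ofReal_ne_top]
    _ = _ := by simp_rw [lintegral_mul_exp_neg_mul_Ioi (hb _), one_mul]

end

theorem stmt16_general {Ω : Type*} {X : Type*} [NormedAddCommGroup X] [NormedSpace ℝ X]
    [CompleteSpace X] [m0 : MeasurableSpace Ω] (μ : Measure Ω)
    (F : ℕ → MeasurableSpace Ω)
    (q : ℝ) (hq : 1 ≤ q) (N : ℝ) (hN : 1 < N)
    (b : ℕ → ℝ) (hb : ∀ k, 1 ≤ k → 0 < b k)
    (hgrow : ∀ k, 2 ≤ k → N * b (k - 1) ≤ b k)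
    (f : Ω → X) :
    ∀ᵐ ω ∂μ,
      (∫⁻ t in Ioi (0 : ℝ), ENNReal.ofReal
          (‖∑' k : ℕ, (t * b (k + 1) * Real.exp (-(t * b (k + 1)))) •
            dEv μ F f (k + 2) ω‖ ^ q / t)) ≤
        ENNReal.ofReal ((N / (N - 1)) ^ (q - 1)) *
          ∑' k : ℕ, ENNReal.ofReal (‖dEv μ F f (k + 2) ω‖ ^ q) :=
  Eventually.of_forall fun ω =>
    lintegral_norm_tsum_rpow_le hq hN (b := fun k => b (k + 1))
      (fun k => by simpa using hgrow (k + 2) (by omega)) _ fun k => hb (k + 1) (by omega)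

/-- For a Banach space `X`, `1 ≤ q < ∞`, `N > 1`, and positive reals `(b_k)` with
`b_k ≥ N b_{k-1}` for `k ≥ 2`: for every `f ∈ L¹(Ω; X)`, `μ`-a.e. on `Ω`,
`∫₀^∞ ‖Σ_{k≥1} t b_k e^{-t b_k} dE_{k+1}(f)‖^q dt/t ≤ (N/(N-1))^{q-1} Σ_{k≥1} ‖dE_{k+1}(f)‖^q`. -/
theorem stmt16 {Ω : Type*} {X : Type*} [NormedAddCommGroup X] [NormedSpace ℝ X]
    [CompleteSpace X] [m0 : MeasurableSpace Ω] (μ : Measure Ω) [IsProbabilityMeasure μ]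
    (F : ℕ → MeasurableSpace Ω) (hle : ∀ n, F n ≤ m0) (hmono : Monotone F)
    (q : ℝ) (hq : 1 ≤ q) (N : ℝ) (hN : 1 < N)
    (b : ℕ → ℝ) (hb : ∀ k, 1 ≤ k → 0 < b k)
    (hgrow : ∀ k, 2 ≤ k → N * b (k - 1) ≤ b k)
    (f : Ω → X) (hf : Integrable f μ) :
    ∀ᵐ ω ∂μ,
      (∫⁻ t in Ioi (0 : ℝ), ENNReal.ofReal
          (‖∑' k : ℕ, (t * b (k + 1) * Real.exp (-(t * b (k + 1)))) •
            dEv μ F f (k + 2) ω‖ ^ q / t)) ≤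
        ENNReal.ofReal ((N / (N - 1)) ^ (q - 1)) *
          ∑' k : ℕ, ENNReal.ofReal (‖dEv μ F f (k + 2) ω‖ ^ q) :=
  stmt16_general (m0 := m0) μ F q hq N hN b hb hgrow f
end

section
/- Let X be a Banach space and 2 ≤ q < ∞. Suppose there is a constant c > 0 such that for every probability space (Ω, 𝒜, μ) with an increasing filtration (𝒜_n)_{n≥1} and every strictly increasing sequence (a_n)_{n≥0} with a_0 = 0 and a_n → 1, one has ‖(∫₀^∞ ‖Σ_{k≥1} t b_k e^{−t b_k} dE_{k+1}(f)‖_X^q dt/t)^{1/q}‖_{L_q(Ω)} ≤ c · ‖f‖_{L_q(Ω; X)} for all f ∈ L_q(Ω; X), where b_k = −ln(1 − a_k). Then X is of martingale cotype q: there is a constant c' depending only on c such that for every probability space with increasing filtration (𝒜_n)_{n≥1} and every f ∈ L_q(Ω; X), Σ_{n≥1} E[‖dE_n(f)‖_X^q] ≤ (c')^q · E[‖f‖_X^q]. -/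
open MeasureTheory Filter Set Topology ENNReal

universe u v

/-!
Stop the filtration after finitely many steps and take the lacunary exponents
`b_k = R^(k+1) - 1`, i.e. `a_k = 1 - e^(1 - R^k)`. On the window `t ∈ (1/b_k, 2/b_k]`, which has
`dt/t`-mass at least `1/2`, the coefficient `t b_k e^(-t b_k)` of `dE_{k+2} f` is at least `e^(-2)`,
while every other coefficient is at most `2/R` because `s e^(-s) ≤ min (s, 2/s)`. The windows are
disjoint, so `‖G‖_q^q` dominates `∑_k (e^(-2) ‖dE_{k+2} f‖ - (2/R) ∑_j ‖dE_{j+2} f‖)_+^q`, and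
letting `R → ∞` (Fatou) gives `∑_{n ≥ 2} E ‖dE_n f‖^q ≤ 2 (e² c)^q E ‖f‖^q`. The remaining term
`E ‖E_1 f‖^q ≤ E ‖f‖^q` is the `L^q`-contractivity of conditional expectation.
-/

namespace Real

lemma exp_neg_two_le_mul_exp_neg {s : ℝ} (h1 : 1 ≤ s) (h2 : s ≤ 2) :
    exp (-2) ≤ s * exp (-s) :=
  calc exp (-2) ≤ exp (-s) := exp_le_exp.mpr (neg_le_neg h2)
    _ ≤ s * exp (-s) := le_mul_of_one_le_left (exp_pos _).le h1

lemma mul_exp_neg_le_self {s : ℝ} (hs : 0 ≤ s) : s * exp (-s) ≤ s :=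
  mul_le_of_le_one_right hs (exp_le_one_iff.mpr (neg_nonpos.mpr hs))

lemma mul_exp_neg_le_two_div {s : ℝ} (hs : 0 < s) : s * exp (-s) ≤ 2 / s := by
  have hsq : s ^ 2 ≤ 2 * exp s := by nlinarith [quadratic_le_exp_of_nonneg hs.le]
  rw [exp_neg, le_div_iff₀ hs]
  calc s * (exp s)⁻¹ * s = s ^ 2 / exp s := by ring
    _ ≤ 2 := by rw [div_le_iff₀ (exp_pos s)]; exact hsq

end Real

lemma mul_mem_Ioc_one_two {β t : ℝ} (hβ : 0 < β) (ht : t ∈ Ioc β⁻¹ (2 * β⁻¹)) :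
    t * β ∈ Ioc 1 2 := by
  obtain ⟨h1, h2⟩ := ht
  constructor
  · simpa [inv_mul_cancel₀ hβ.ne'] using mul_lt_mul_of_pos_right h1 hβ
  · simpa [mul_assoc, inv_mul_cancel₀ hβ.ne'] using mul_le_mul_of_nonneg_right h2 hβ.le

lemma le_two_mul_setLIntegral_Ioc {A : ℝ≥0∞} {u : ℝ} (hu : 0 < u) {g : ℝ → ℝ}
    (h : ∀ t ∈ Ioc u (2 * u), A ≤ ENNReal.ofReal (g t)) :
    A ≤ 2 * ∫⁻ t in Ioc u (2 * u), ENNReal.ofReal (g t / t) := by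
  have hlow : ∀ t ∈ Ioc u (2 * u), A * ENNReal.ofReal (2 * u)⁻¹ ≤ ENNReal.ofReal (g t / t) := by
    intro t ht
    rw [div_eq_mul_inv, ENNReal.ofReal_mul' (inv_nonneg.mpr (hu.trans ht.1).le)]
    exact mul_le_mul' (h t ht) (ENNReal.ofReal_le_ofReal (inv_anti₀ (hu.trans ht.1) ht.2))
  calc A = 2 * (A * ENNReal.ofReal (2 * u)⁻¹ * ENNReal.ofReal u) := by
        rw [mul_assoc, ← ENNReal.ofReal_mul (by positivity),
          show (2 * u)⁻¹ * u = 2⁻¹ by field_simp, ENNReal.ofReal_inv_of_pos two_pos,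
          ENNReal.ofReal_ofNat, mul_comm, mul_assoc,
          ENNReal.inv_mul_cancel two_ne_zero ofNat_ne_top, mul_one]
    _ = 2 * ∫⁻ _ in Ioc u (2 * u), A * ENNReal.ofReal (2 * u)⁻¹ := by
        rw [setLIntegral_const, Real.volume_Ioc, show 2 * u - u = u by ring]
    _ ≤ 2 * ∫⁻ t in Ioc u (2 * u), ENNReal.ofReal (g t / t) := by
        gcongr 2 * ?_
        exact setLIntegral_mono' measurableSet_Ioc hlow

lemma mul_norm_le_norm_sum_add {ι X : Type*} [DecidableEq ι] [NormedAddCommGroup X]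
    [NormedSpace ℝ X] {s : Finset ι} {k : ι} (hk : k ∈ s) (v : ι → X) (φ : ι → ℝ) {δ ε : ℝ}
    (hδ : δ ≤ φ k) (hε : 0 ≤ ε) (hφ : ∀ j ∈ s, j ≠ k → ‖φ j‖ ≤ ε) :
    δ * ‖v k‖ ≤ ‖∑ j ∈ s, φ j • v j‖ + ε * ∑ j ∈ s, ‖v j‖ := by
  have hsplit : φ k • v k = ∑ j ∈ s, φ j • v j - ∑ j ∈ s.erase k, φ j • v j := by
    rw [eq_sub_iff_add_eq, Finset.add_sum_erase s (fun j => φ j • v j) hk]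
  have herr : ∑ j ∈ s.erase k, ‖φ j • v j‖ ≤ ε * ∑ j ∈ s, ‖v j‖ :=
    calc ∑ j ∈ s.erase k, ‖φ j • v j‖ ≤ ∑ j ∈ s.erase k, ε * ‖v j‖ := by
          refine Finset.sum_le_sum fun j hj => ?_
          rw [norm_smul]
          exact mul_le_mul_of_nonneg_right
            (hφ j (Finset.mem_of_mem_erase hj) (Finset.ne_of_mem_erase hj)) (norm_nonneg _)
      _ ≤ ε * ∑ j ∈ s, ‖v j‖ := by
          rw [← Finset.mul_sum]
          exact mul_le_mul_of_nonneg_left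
            (Finset.sum_le_sum_of_subset_of_nonneg (Finset.erase_subset _ _)
              fun _ _ _ => norm_nonneg _) hε
  calc δ * ‖v k‖ ≤ ‖φ k • v k‖ := by
        rw [norm_smul]
        exact mul_le_mul_of_nonneg_right (hδ.trans (Real.le_norm_self _)) (norm_nonneg _)
    _ ≤ ‖∑ j ∈ s, φ j • v j‖ + ∑ j ∈ s.erase k, ‖φ j • v j‖ := by
        rw [hsplit]
        exact (norm_sub_le _ _).trans (by gcongr; exact norm_sum_le _ _)
    _ ≤ _ := by gcongr

section Lacunary

variable {R : ℝ} {b : ℕ → ℝ}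

lemma mul_le_of_lt_of_lacunary (hR : 1 ≤ R) (hb : ∀ k, 0 < b k) (hlac : ∀ k, R * b k ≤ b (k + 1))
    {j k : ℕ} (hjk : j < k) : R * b j ≤ b k := by
  induction k, hjk using Nat.le_induction with
  | base => exact hlac j
  | succ k _ ih => exact ih.trans ((le_mul_of_one_le_left (hb k).le hR).trans (hlac k))

lemma two_mul_inv_le_inv_of_lacunary (hR : 2 ≤ R) (hb : ∀ k, 0 < b k)
    (hlac : ∀ k, R * b k ≤ b (k + 1)) {j k : ℕ} (hjk : j < k) : 2 * (b k)⁻¹ ≤ (b j)⁻¹ := by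
  have hRb := mul_le_of_lt_of_lacunary (by linarith) hb hlac hjk
  have hbj := hb j
  rw [← div_eq_mul_inv, div_le_iff₀ (hb k), inv_mul_eq_div, le_div_iff₀ (hb j)]
  nlinarith

lemma pairwiseDisjoint_Ioc_inv_of_lacunary (hR : 2 ≤ R) (hb : ∀ k, 0 < b k)
    (hlac : ∀ k, R * b k ≤ b (k + 1)) (s : Set ℕ) :
    s.PairwiseDisjoint fun k => Ioc (b k)⁻¹ (2 * (b k)⁻¹) := by
  intro j _ k _ hjk
  rcases hjk.lt_or_gt with h | h
  · exact (Ioc_disjoint_Ioc_of_le (two_mul_inv_le_inv_of_lacunary hR hb hlac h)).symm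
  · exact Ioc_disjoint_Ioc_of_le (two_mul_inv_le_inv_of_lacunary hR hb hlac h)

lemma sum_setLIntegral_Ioc_inv_le_of_lacunary (hR : 2 ≤ R) (hb : ∀ k, 0 < b k)
    (hlac : ∀ k, R * b k ≤ b (k + 1)) (s : Finset ℕ) (g : ℝ → ℝ≥0∞) :
    ∑ k ∈ s, ∫⁻ t in Ioc (b k)⁻¹ (2 * (b k)⁻¹), g t ≤ ∫⁻ t in Ioi 0, g t := by
  rw [← lintegral_biUnion_finset (pairwiseDisjoint_Ioc_inv_of_lacunary hR hb hlac _)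
    (fun _ _ => measurableSet_Ioc)]
  exact lintegral_mono_set (iUnion₂_subset fun k _ t ht => (inv_pos.mpr (hb k)).trans ht.1)

lemma mul_exp_neg_le_two_div_of_lacunary (hR : 1 ≤ R) (hb : ∀ k, 0 < b k)
    (hlac : ∀ k, R * b k ≤ b (k + 1)) {k : ℕ} {t : ℝ} (ht : t ∈ Ioc (b k)⁻¹ (2 * (b k)⁻¹))
    {j : ℕ} (hjk : j ≠ k) : t * b j * Real.exp (-(t * b j)) ≤ 2 / R := by
  have ht0 : 0 < t := (inv_pos.mpr (hb k)).trans ht.1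
  have hR0 : 0 < R := by linarith
  have htk := mul_mem_Ioc_one_two (hb k) ht
  have hbj := hb j
  rcases hjk.lt_or_gt with h | h
  · have hj := mul_le_of_lt_of_lacunary hR hb hlac h
    refine (Real.mul_exp_neg_le_self (by positivity)).trans ?_
    rw [le_div_iff₀ hR0]
    nlinarith [htk.2]
  · have hj := mul_le_of_lt_of_lacunary hR hb hlac h
    have hRt : R < t * b j := by nlinarith [hb k, htk.1]
    exact (Real.mul_exp_neg_le_two_div (by linarith)).trans
      (div_le_div_of_nonneg_left zero_le_two hR0 hRt.le)

theorem sum_ofReal_rpow_le_lintegral_of_lacunary {X : Type*} [NormedAddCommGroup X]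
    [NormedSpace ℝ X] {q : ℝ} (hq : 0 ≤ q) (hR : 2 ≤ R) (hb : ∀ k, 0 < b k)
    (hlac : ∀ k, R * b k ≤ b (k + 1)) (s : Finset ℕ) (v : ℕ → X) :
    ∑ k ∈ s, ENNReal.ofReal (Real.exp (-2) * ‖v k‖ - 2 / R * ∑ j ∈ s, ‖v j‖) ^ q ≤
      2 * ∫⁻ t in Ioi 0,
        ENNReal.ofReal (‖∑ j ∈ s, (t * b j * Real.exp (-(t * b j))) • v j‖ ^ q / t) := by
  have hwindow : ∀ k ∈ s, ∀ t ∈ Ioc (b k)⁻¹ (2 * (b k)⁻¹),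
      ENNReal.ofReal (Real.exp (-2) * ‖v k‖ - 2 / R * ∑ j ∈ s, ‖v j‖) ^ q ≤
        ENNReal.ofReal (‖∑ j ∈ s, (t * b j * Real.exp (-(t * b j))) • v j‖ ^ q) := by
    intro k hk t ht
    have ht0 : 0 < t := (inv_pos.mpr (hb k)).trans ht.1
    have htk := mul_mem_Ioc_one_two (hb k) ht
    have hcoeff := mul_norm_le_norm_sum_add hk v (fun j => t * b j * Real.exp (-(t * b j)))
      (ε := 2 / R) (Real.exp_neg_two_le_mul_exp_neg htk.1.le htk.2) (by positivity)
      fun j _ hjk => by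
        rw [Real.norm_of_nonneg (mul_nonneg (mul_nonneg ht0.le (hb j).le) (Real.exp_pos _).le)]
        exact mul_exp_neg_le_two_div_of_lacunary (by linarith) hb hlac ht hjk
    rw [← ENNReal.ofReal_rpow_of_nonneg (norm_nonneg _) hq]
    exact ENNReal.rpow_le_rpow (ENNReal.ofReal_le_ofReal (by linarith)) hq
  calc _ ≤ ∑ k ∈ s, 2 * ∫⁻ t in Ioc (b k)⁻¹ (2 * (b k)⁻¹),
        ENNReal.ofReal (‖∑ j ∈ s, (t * b j * Real.exp (-(t * b j))) • v j‖ ^ q / t) :=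
        Finset.sum_le_sum fun k hk =>
          le_two_mul_setLIntegral_Ioc (inv_pos.mpr (hb k)) (hwindow k hk)
    _ ≤ _ := by
        rw [← Finset.mul_sum]
        gcongr 2 * ?_
        exact sum_setLIntegral_Ioc_inv_le_of_lacunary hR hb hlac s _

end Lacunary

lemma lintegral_le_of_tendsto {α ι : Type*} [MeasurableSpace α] {μ : Measure α} {u : Filter ι}
    [u.NeBot] [u.IsCountablyGenerated] {f : ι → α → ℝ≥0∞} {g : α → ℝ≥0∞} {B : ℝ≥0∞}
    (hf : ∀ i, AEMeasurable (f i) μ) (hlim : ∀ a, Tendsto (fun i => f i a) u (𝓝 (g a)))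
    (hB : ∀ᶠ i in u, ∫⁻ a, f i a ∂μ ≤ B) : ∫⁻ a, g a ∂μ ≤ B :=
  calc ∫⁻ a, g a ∂μ = ∫⁻ a, liminf (fun i => f i a) u ∂μ :=
        lintegral_congr fun a => (hlim a).liminf_eq.symm
    _ ≤ liminf (fun i => ∫⁻ a, f i a ∂μ) u := lintegral_liminf_le' hf
    _ ≤ B := liminf_le_of_frequently_le' hB.frequently

lemma lintegral_ofReal_norm_rpow_eq {α E : Type*} [MeasurableSpace α] {μ : Measure α}
    [NormedAddCommGroup E] {q : ℝ} (hq : 0 < q) (g : α → E) :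
    ∫⁻ ω, ENNReal.ofReal (‖g ω‖ ^ q) ∂μ = eLpNorm g (ENNReal.ofReal q) μ ^ q := by
  rw [eLpNorm_eq_eLpNorm' (by simpa using hq) ENNReal.ofReal_ne_top, ENNReal.toReal_ofReal hq.le,
    ← lintegral_rpow_enorm_eq_rpow_eLpNorm' hq]
  exact lintegral_congr fun ω => by
    rw [← ofReal_norm, ENNReal.ofReal_rpow_of_nonneg (norm_nonneg _) hq.le]

section Exponents

variable {B : ℕ → ℝ}

lemma strictMono_one_sub_exp_neg (hB : StrictMono B) :
    StrictMono fun k => 1 - Real.exp (-B k) :=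
  fun _ _ h => sub_lt_sub_left (Real.exp_lt_exp.mpr (neg_lt_neg (hB h))) 1

lemma tendsto_one_sub_exp_neg (hB : Tendsto B atTop atTop) :
    Tendsto (fun k => 1 - Real.exp (-B k)) atTop (𝓝 1) := by
  simpa using tendsto_const_nhds.sub
    (Real.tendsto_exp_atBot.comp (tendsto_neg_atTop_atBot.comp hB))

end Exponents

section Martingale

variable {Ω X : Type*} [NormedAddCommGroup X] [NormedSpace ℝ X] [CompleteSpace X]
  [m0 : MeasurableSpace Ω] {μ : Measure Ω} {F : ℕ → MeasurableSpace Ω} {f : Ω → X}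

lemma dEv_stop_of_le {N n : ℕ} (hn : n ≤ N) :
    dEv μ (fun m => F (min m N)) f n = dEv μ F f n := by
  unfold dEv condEv
  simp only [min_eq_left hn, min_eq_left ((Nat.sub_le n 1).trans hn)]

lemma dEv_stop_of_lt {N n : ℕ} (hN : 0 < N) (hn : N < n) :
    dEv μ (fun m => F (min m N)) f n = 0 := by
  funext ω
  unfold dEv condEv
  simp only [min_eq_right hn.le, min_eq_right (Nat.le_sub_one_of_lt hn),
    if_neg (by omega : n ≠ 0), if_neg (by omega : n - 1 ≠ 0), sub_self, Pi.zero_apply]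

lemma stronglyMeasurable_dEv (hF : ∀ n, F n ≤ m0) (n : ℕ) :
    StronglyMeasurable (dEv μ F f n) := by
  have hE : ∀ n, StronglyMeasurable (condEv μ F f n) := fun n => by
    unfold condEv
    split_ifs
    exacts [stronglyMeasurable_const, stronglyMeasurable_condExp.mono (hF n)]
  exact (hE n).sub (hE (n - 1))

lemma lintegral_dEv_one_rpow_le {q : ℝ} (hq : 1 ≤ q) :
    ∫⁻ ω, ENNReal.ofReal (‖dEv μ F f 1 ω‖ ^ q) ∂μ ≤ ∫⁻ ω, ENNReal.ofReal (‖f ω‖ ^ q) ∂μ := by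
  have hq0 : 0 < q := by linarith
  have hd : dEv μ F f 1 = μ[f | F 1] := by
    funext ω
    simp [dEv, condEv]
  rw [hd, lintegral_ofReal_norm_rpow_eq hq0, lintegral_ofReal_norm_rpow_eq hq0]
  gcongr
  exact eLpNorm_condExp_le_eLpNorm f (by simpa using hq)

/-- `(∫₀^∞ ‖t ∂ₜ Tᵗ f(ω)‖^q dt/t)^{1/q}` for the semigroup `Tᵗ` attached to `a`. -/
noncomputable def lpsGFunction (μ : Measure Ω) (F : ℕ → MeasurableSpace Ω) (a : ℕ → ℝ)
    (q : ℝ) (f : Ω → X) (ω : Ω) : ℝ≥0∞ :=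
  (∫⁻ t in Ioi (0 : ℝ), ENNReal.ofReal
    (‖∑' k : ℕ, (t * (-Real.log (1 - a (k + 1))) *
      Real.exp (-(t * (-Real.log (1 - a (k + 1)))))) • dEv μ F f (k + 2) ω‖ ^ q / t)) ^ (1 / q)

def LPSInequality (μ : Measure Ω) (q c : ℝ) (f : Ω → X) : Prop :=
  ∀ F : ℕ → MeasurableSpace Ω, (∀ n, F n ≤ m0) → Monotone F →
    ∀ a : ℕ → ℝ, a 0 = 0 → StrictMono a → Tendsto a atTop (𝓝 (1 : ℝ)) →
      (∫⁻ ω, lpsGFunction μ F a q f ω ^ q ∂μ) ^ (1 / q) ≤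
        ENNReal.ofReal c * eLpNorm f (ENNReal.ofReal q) μ

lemma lacunary_pow_succ_sub_one {R : ℝ} (hR : 1 < R) :
    (∀ k, 0 < R ^ (k + 1) - 1) ∧ ∀ k, R * (R ^ (k + 1) - 1) ≤ R ^ (k + 1 + 1) - 1 :=
  ⟨fun k => sub_pos.mpr (one_lt_pow₀ hR k.succ_ne_zero),
    fun k => by rw [pow_succ' R (k + 1)]; linarith⟩

namespace LPSInequality

variable {q c : ℝ}

lemma lintegral_stop_le (hLPS : LPSInequality μ q c f) (hq : 0 < q) (hF : ∀ n, F n ≤ m0)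
    (hFm : Monotone F) {R : ℝ} (hR : 1 < R) (K : ℕ) :
    ∫⁻ ω, (∫⁻ t in Ioi (0 : ℝ), ENNReal.ofReal (‖∑ j ∈ Finset.range K,
        (t * (R ^ (j + 1) - 1) * Real.exp (-(t * (R ^ (j + 1) - 1)))) • dEv μ F f (j + 2) ω‖ ^ q
          / t)) ∂μ ≤
      ENNReal.ofReal c ^ q * ∫⁻ ω, ENNReal.ofReal (‖f ω‖ ^ q) ∂μ := by
  have hB : StrictMono fun k : ℕ => R ^ k - 1 := fun _ _ h => by
    simpa using pow_lt_pow_right₀ hR h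
  have hBlim : Tendsto (fun k : ℕ => R ^ k - 1) atTop atTop :=
    tendsto_atTop_add_const_right _ _ (tendsto_pow_atTop_atTop_of_one_lt hR)
  have key := hLPS (fun n => F (min n (K + 1))) (fun n => hF _)
    (fun _ _ h => hFm (min_le_min_right _ h)) _ (by simp) (strictMono_one_sub_exp_neg hB)
    (tendsto_one_sub_exp_neg hBlim)
  rw [← ENNReal.rpow_le_rpow_iff hq, ← ENNReal.rpow_mul, one_div_mul_cancel hq.ne',
    ENNReal.rpow_one, ENNReal.mul_rpow_of_nonneg _ _ hq.le,
    ← lintegral_ofReal_norm_rpow_eq hq] at key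
  refine le_trans (le_of_eq (lintegral_congr fun ω => ?_)) key
  rw [lpsGFunction, ← ENNReal.rpow_mul, one_div_mul_cancel hq.ne', ENNReal.rpow_one]
  refine setLIntegral_congr_fun measurableSet_Ioi fun t _ => ?_
  simp only [_root_.sub_sub_cancel, Real.log_exp, neg_neg]
  rw [tsum_eq_sum (s := Finset.range K) fun j hj => by
    rw [dEv_stop_of_lt K.succ_pos (by simpa using hj), Pi.zero_apply, smul_zero]]
  refine congrArg (fun x => ENNReal.ofReal (‖x‖ ^ q / t)) (Finset.sum_congr rfl fun j hj => ?_)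
  rw [dEv_stop_of_le (by simpa using hj)]

lemma lintegral_sum_rpow_sub_le (hLPS : LPSInequality μ q c f) (hq : 0 < q)
    (hF : ∀ n, F n ≤ m0) (hFm : Monotone F) {R : ℝ} (hR : 2 ≤ R) (K : ℕ) :
    ∫⁻ ω, ∑ k ∈ Finset.range K, ENNReal.ofReal (Real.exp (-2) * ‖dEv μ F f (k + 2) ω‖ -
        2 / R * ∑ j ∈ Finset.range K, ‖dEv μ F f (j + 2) ω‖) ^ q ∂μ ≤
      2 * (ENNReal.ofReal c ^ q * ∫⁻ ω, ENNReal.ofReal (‖f ω‖ ^ q) ∂μ) := by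
  obtain ⟨hb, hlac⟩ := lacunary_pow_succ_sub_one (by linarith : 1 < R)
  calc _ ≤ ∫⁻ ω, 2 * (∫⁻ t in Ioi (0 : ℝ), ENNReal.ofReal (‖∑ j ∈ Finset.range K,
        (t * (R ^ (j + 1) - 1) * Real.exp (-(t * (R ^ (j + 1) - 1)))) • dEv μ F f (j + 2) ω‖ ^ q
          / t)) ∂μ :=
        lintegral_mono fun ω => sum_ofReal_rpow_le_lintegral_of_lacunary hq.le hR hb hlac _ _
    _ ≤ _ := by
        rw [lintegral_const_mul' _ _ (by simp)]
        gcongr 2 * ?_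
        exact hLPS.lintegral_stop_le hq hF hFm (by linarith) K

theorem sum_lintegral_dEv_rpow_le (hLPS : LPSInequality μ q c f) (hq : 0 < q)
    (hF : ∀ n, F n ≤ m0) (hFm : Monotone F) (K : ℕ) :
    ∑ k ∈ Finset.range K, ∫⁻ ω, ENNReal.ofReal (‖dEv μ F f (k + 2) ω‖ ^ q) ∂μ ≤
      2 * ENNReal.ofReal (Real.exp 2 * c) ^ q * ∫⁻ ω, ENNReal.ofReal (‖f ω‖ ^ q) ∂μ := by
  set d : ℕ → Ω → ℝ := fun k ω => ‖dEv μ F f (k + 2) ω‖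
  have hmeas : ∀ k, Measurable (d k) := fun k => (stronglyMeasurable_dEv hF _).norm.measurable
  set γ : ℝ≥0∞ := ENNReal.ofReal (Real.exp 2) ^ q with hγ
  have hγ_ne_top : γ ≠ ∞ := ENNReal.rpow_ne_top_of_nonneg hq.le ENNReal.ofReal_ne_top
  have hrescale : ∀ k ω,
      ENNReal.ofReal (d k ω ^ q) = γ * ENNReal.ofReal (Real.exp (-2) * d k ω) ^ q := by
    intro k ω
    rw [← ENNReal.ofReal_rpow_of_nonneg (norm_nonneg _) hq.le, hγ,
      ← ENNReal.mul_rpow_of_nonneg _ _ hq.le, ← ENNReal.ofReal_mul (Real.exp_pos 2).le,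
      ← mul_assoc, ← Real.exp_add, add_neg_cancel, Real.exp_zero, one_mul]
  have hlimit : ∫⁻ ω, ∑ k ∈ Finset.range K, ENNReal.ofReal (d k ω ^ q) ∂μ ≤
      γ * (2 * (ENNReal.ofReal c ^ q * ∫⁻ ω, ENNReal.ofReal (‖f ω‖ ^ q) ∂μ)) := by
    refine lintegral_le_of_tendsto (u := (atTop : Filter ℝ))
      (f := fun R ω => γ * ∑ k ∈ Finset.range K, ENNReal.ofReal
        (Real.exp (-2) * d k ω - 2 / R * ∑ j ∈ Finset.range K, d j ω) ^ q) (fun R => by fun_prop)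
      (fun ω => ?_) ?_
    · simp only [hrescale, ← Finset.mul_sum]
      refine ENNReal.Tendsto.const_mul (tendsto_finsetSum _ fun k _ => ?_) (Or.inr hγ_ne_top)
      have h : Tendsto (fun R => Real.exp (-2) * d k ω - 2 / R * ∑ j ∈ Finset.range K, d j ω)
          atTop (𝓝 (Real.exp (-2) * d k ω)) := by
        simpa using tendsto_const_nhds.sub
          ((tendsto_const_nhds.div_atTop tendsto_id).mul_const (∑ j ∈ Finset.range K, d j ω))
      exact (ENNReal.continuous_rpow_const.tendsto _).comp
        ((ENNReal.continuous_ofReal.tendsto _).comp h)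
    · filter_upwards [eventually_ge_atTop 2] with R hR
      rw [lintegral_const_mul' _ _ hγ_ne_top]
      gcongr γ * ?_
      exact hLPS.lintegral_sum_rpow_sub_le hq hF hFm hR K
  rw [← lintegral_finsetSum _ fun k _ => (hmeas k).pow_const q |>.ennreal_ofReal]
  refine hlimit.trans (le_of_eq ?_)
  rw [hγ, ENNReal.ofReal_mul (Real.exp_pos 2).le, ENNReal.mul_rpow_of_nonneg _ _ hq.le]
  ring

end LPSInequality

end Martingale

/-- If for some constant `c > 0` the `L_q`-Littlewood-Paley-Stein inequality
`‖G_q^T(f)‖_{L_q(Ω)} ≤ c ‖f‖_{L_q(Ω;X)}` holds for the semigroup built from every strictly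
increasing sequence `(a_n)` (with `a_0 = 0`, `a_n → 1`) on every filtered probability space,
then `X` is of martingale cotype `q`. -/
theorem stmt18 (X : Type u) [NormedAddCommGroup X] [NormedSpace ℝ X] [CompleteSpace X]
    (q : ℝ) (hq : 2 ≤ q) (c : ℝ) (hc : 0 < c)
    (H : ∀ (Ω : Type v) (m0 : MeasurableSpace Ω) (μ : Measure Ω), IsProbabilityMeasure μ →
      ∀ F : ℕ → MeasurableSpace Ω, (∀ n, F n ≤ m0) → Monotone F →
      ∀ a : ℕ → ℝ, a 0 = 0 → StrictMono a → Tendsto a atTop (𝓝 (1 : ℝ)) →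
      ∀ f : Ω → X, MemLp f (ENNReal.ofReal q) μ →
        (∫⁻ ω, ((∫⁻ t in Ioi (0 : ℝ), ENNReal.ofReal
            (‖∑' k : ℕ, (t * (-Real.log (1 - a (k + 1))) *
              Real.exp (-(t * (-Real.log (1 - a (k + 1)))))) • dEv μ F f (k + 2) ω‖ ^ q / t))
            ^ (1 / q)) ^ q ∂μ) ^ (1 / q) ≤
          ENNReal.ofReal c * eLpNorm f (ENNReal.ofReal q) μ) :
    ∃ c' : ℝ, 0 < c' ∧
      ∀ (Ω : Type v) (m0 : MeasurableSpace Ω) (μ : Measure Ω), IsProbabilityMeasure μ →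
      ∀ F : ℕ → MeasurableSpace Ω, (∀ n, F n ≤ m0) → Monotone F →
      ∀ f : Ω → X, MemLp f (ENNReal.ofReal q) μ →
        (∑' n : ℕ, ∫⁻ ω, ENNReal.ofReal (‖dEv μ F f (n + 1) ω‖ ^ q) ∂μ) ≤
          ENNReal.ofReal (c' ^ q) * ∫⁻ ω, ENNReal.ofReal (‖f ω‖ ^ q) ∂μ := by
  have hq0 : 0 < q := by linarith
  refine ⟨(2 * (Real.exp 2 * c) ^ q + 1) ^ (1 / q), by positivity, ?_⟩
  intro Ω m0 μ hμ F hF hFm f hf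
  have hLPS : LPSInequality μ q c f := fun F hF hFm a ha0 ha ha1 =>
    H Ω m0 μ hμ F hF hFm a ha0 ha ha1 f hf
  have hC : 0 ≤ Real.exp 2 * c := by positivity
  have hCq : 0 ≤ 2 * (Real.exp 2 * c) ^ q := by positivity
  rw [← Real.rpow_mul (by linarith), one_div_mul_cancel hq0.ne', Real.rpow_one,
    ENNReal.ofReal_add hCq zero_le_one, ENNReal.ofReal_mul zero_le_two,
    ← ENNReal.ofReal_rpow_of_nonneg hC hq0.le, tsum_eq_zero_add' ENNReal.summable]
  calc _ ≤ ∫⁻ ω, ENNReal.ofReal (‖f ω‖ ^ q) ∂μ +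
        2 * ENNReal.ofReal (Real.exp 2 * c) ^ q * ∫⁻ ω, ENNReal.ofReal (‖f ω‖ ^ q) ∂μ :=
        add_le_add (lintegral_dEv_one_rpow_le (by linarith))
          (ENNReal.tsum_le_of_sum_range_le (hLPS.sum_lintegral_dEv_rpow_le hq0 hF hFm))
    _ = _ := by simp only [ENNReal.ofReal_ofNat, ENNReal.ofReal_one]; ring
end
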